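/- arXiv:1503.05393 — 7 statements merged into one kernel-verified Lean document; each statement's English description precedes it below -/
import Mathlib

section
/- There is a constant C > 0 (depending at most on d) such that for every pair (x,y) ∈ ℝ^d×ℝ^d in the local region N_2 and every 0 < r < 1, one has |⟨rx−y, x⟩| · exp(−|rx−y|²/(2(1−r²))) ≤ C, where ⟨·,·⟩ is the Euclidean inner product. -/
open MeasureTheory

/-- The Mehler kernel `M_r(x,y)`. -/
noncomputable def mehler (d : ℕ) (r : ℝ) (x y : EuclideanSpace ℝ (Fin d)) : ℝ :=
  Real.pi ^ (-(d : ℝ) / 2) * (1 - r ^ 2) ^ (-(d : ℝ) / 2) *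
    Real.exp (-‖r • x - y‖ ^ 2 / (1 - r ^ 2))

/-- The heat-type kernel `W_r(z)`. -/
noncomputable def wkernel (d : ℕ) (r : ℝ) (z : EuclideanSpace ℝ (Fin d)) : ℝ :=
  Real.pi ^ (-(d : ℝ) / 2) * (1 - r ^ 2) ^ (-(d : ℝ) / 2) *
    Real.exp (-‖z‖ ^ 2 / (1 - r ^ 2))

/-- The local region `N_s`. -/
def localRegion (d : ℕ) (s : ℝ) :
    Set (EuclideanSpace ℝ (Fin d) × EuclideanSpace ℝ (Fin d)) :=
  {p | ‖p.1 - p.2‖ ≤ s / (1 + ‖p.1‖ + ‖p.2‖)}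

set_option maxHeartbeats 1000000 in
theorem stmt3 (d : ℕ) :
    ∃ C : ℝ, 0 < C ∧ ∀ x y : EuclideanSpace ℝ (Fin d), (x, y) ∈ localRegion d 2 →
      ∀ r : ℝ, 0 < r → r < 1 →
        |(inner ℝ (r • x - y) x : ℝ)| * Real.exp (-‖r • x - y‖ ^ 2 / (2 * (1 - r ^ 2))) ≤ C := by
  refine ⟨20, by norm_num, fun x y hxy r hr0 hr1 => ?_⟩
  simp only [localRegion, Set.mem_setOf_eq] at hxy
  set a := ‖x‖ with ha
  set e := ‖x - y‖ with he
  set u := ‖r • x - y‖ with hu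
  set E := Real.exp (-u ^ 2 / (2 * (1 - r ^ 2))) with hE
  have ha0 : 0 ≤ a := norm_nonneg x
  have he0 : 0 ≤ e := norm_nonneg _
  have hu0 : 0 ≤ u := norm_nonneg _
  have ht0 : 0 < 1 - r ^ 2 := by nlinarith
  have h1r : 0 < 1 - r := by linarith
  have hy0 : 0 ≤ ‖y‖ := norm_nonneg y
  -- e * (1 + a) ≤ 2
  have hea : e * (1 + a) ≤ 2 := by
    have h1 : (0:ℝ) < 1 + a + ‖y‖ := by positivity
    have h2 : e * (1 + a + ‖y‖) ≤ 2 := by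
      rw [← le_div_iff₀ h1]; exact hxy
    nlinarith
  -- exp factor ≤ 1
  have hE1 : E ≤ 1 := by
    rw [hE]
    refine Real.exp_le_one_iff.mpr (div_nonpos_of_nonpos_of_nonneg ?_ ?_)
    · nlinarith
    · linarith
  have hE0 : 0 < E := Real.exp_pos _
  -- inner expansion
  have hinner : (inner ℝ (r • x - y) x : ℝ) = inner ℝ (x - y) x - (1 - r) * a ^ 2 := by
    have hxyeq : r • x - y = (x - y) - (1 - r) • x := by module
    rw [hxyeq, inner_sub_left, real_inner_smul_left, real_inner_self_eq_norm_sq]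
  have habs : |(inner ℝ (r • x - y) x : ℝ)| ≤ e * a + (1 - r) * a ^ 2 := by
    rw [hinner]
    have h1 : |(inner ℝ (x - y) x : ℝ)| ≤ e * a := abs_real_inner_le_norm (x - y) x
    have h3 : (0:ℝ) ≤ (1 - r) * a ^ 2 := by positivity
    calc |(inner ℝ (x - y) x : ℝ) - (1 - r) * a ^ 2|
        ≤ |(inner ℝ (x - y) x : ℝ)| + |(1 - r) * a ^ 2| := abs_sub _ _
      _ ≤ e * a + (1 - r) * a ^ 2 := by rw [abs_of_nonneg h3]; linarith
  -- first term
  have h1st : e * a * E ≤ 2 := by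
    have h2 : e * a ≤ 2 := by nlinarith
    nlinarith
  -- second term
  have h2nd : (1 - r) * a ^ 2 * E ≤ 16 := by
    by_cases hs : (1 - r) * a ^ 2 ≤ 4
    · have h3 : (0:ℝ) ≤ (1 - r) * a ^ 2 := by positivity
      nlinarith
    · push_neg at hs
      have ha1 : 0 < a := by nlinarith
      have h2 : e * a ≤ 2 := by nlinarith
      -- e ≤ (1-r)*a/2
      have heb : e ≤ (1 - r) * a / 2 := by nlinarith [mul_pos ha1 ha1]
      -- u ≥ (1-r)*a - e
      have hub : (1 - r) * a - e ≤ u := by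
        have h4 : ‖(1 - r) • x‖ - ‖x - y‖ ≤ ‖(1 - r) • x - (x - y)‖ :=
          norm_sub_norm_le _ _
        have h5 : ‖(1 - r) • x‖ = (1 - r) * a := by
          rw [norm_smul, Real.norm_eq_abs, abs_of_pos h1r]
        have h6 : (1 - r) • x - (x - y) = -(r • x - y) := by module
        rw [h5, h6, norm_neg] at h4
        exact h4
      have hub2 : (1 - r) * a / 2 ≤ u := by linarith
      have husq : ((1 - r) * a / 2) ^ 2 ≤ u ^ 2 := by
        apply pow_le_pow_left₀ (by positivity) hub2
      -- exponent bound
      have hexp : -u ^ 2 / (2 * (1 - r ^ 2)) ≤ -((1 - r) * a ^ 2) / 16 := by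
        rw [div_le_div_iff₀ (by linarith) (by norm_num)]
        nlinarith [husq, sq_nonneg ((1 - r) * a), sq_nonneg a, mul_pos h1r h1r]
      have hEle : E ≤ Real.exp (-((1 - r) * a ^ 2) / 16) := Real.exp_le_exp.mpr hexp
      have hkey : (1 - r) * a ^ 2 * Real.exp (-((1 - r) * a ^ 2) / 16) ≤ 16 := by
        set s := (1 - r) * a ^ 2 with hsd
        have h7 : s / 16 ≤ Real.exp (s / 16) := by
          linarith [Real.add_one_le_exp (s / 16)]
        have h8 : 0 < Real.exp (s / 16) := Real.exp_pos _
        have h9 : Real.exp (-s / 16) * Real.exp (s / 16) = 1 := by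
          rw [← Real.exp_add, neg_div]; ring_nf; exact Real.exp_zero
        have h10 : 0 < Real.exp (-s / 16) := Real.exp_pos _
        nlinarith [h7, h8, h9, h10]
      nlinarith [hkey, hEle, hE0, hs]
  calc |(inner ℝ (r • x - y) x : ℝ)| * E ≤ (e * a + (1 - r) * a ^ 2) * E := by nlinarith
    _ = e * a * E + (1 - r) * a ^ 2 * E := by ring
    _ ≤ 20 := by linarith
end

section
/- There is a constant C = C(d) such that for all z ∈ ℝ^d with z ≠ 0, ∫_0^1 |∂_r W_r(z)| dr ≤ C |z|^{−d}. -/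
open MeasureTheory

lemma wkernel_hasDerivAt (d : ℕ) (z : EuclideanSpace ℝ (Fin d)) {r : ℝ}
    (hu : 0 < 1 - r ^ 2) :
    HasDerivAt (fun r' => wkernel d r' z)
      (Real.pi ^ (-(d:ℝ)/2) * Real.exp (-‖z‖^2 / (1-r^2)) * r *
        ((1-r^2) ^ (-(d:ℝ)/2 - 1)) * ((d:ℝ) - 2*‖z‖^2/(1-r^2))) r := by
  have h1 : HasDerivAt (fun x : ℝ => 1 - x ^ 2) (-(2*r)) r := by
    simpa using ((hasDerivAt_pow 2 r).const_sub 1)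
  have h2 : HasDerivAt (fun x : ℝ => (1 - x ^ 2) ^ (-(d:ℝ)/2))
      (-(2*r) * (-(d:ℝ)/2) * (1-r^2) ^ (-(d:ℝ)/2 - 1)) r :=
    h1.rpow_const (Or.inl hu.ne')
  have h3 : HasDerivAt (fun x : ℝ => -‖z‖^2 / (1 - x^2))
      ((0 * (1-r^2) - (-‖z‖^2) * (-(2*r))) / (1-r^2)^2) r :=
    (hasDerivAt_const r (-‖z‖^2 : ℝ)).div h1 hu.ne'
  have h4 := h3.exp
  have h5 := h2.mul h4
  have h6 := h5.const_mul (Real.pi ^ (-(d:ℝ)/2) : ℝ)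
  simp only [← mul_assoc] at h6
  have hA : (1-r^2) ^ (-(d:ℝ)/2) = (1-r^2) ^ (-(d:ℝ)/2 - 1) * (1-r^2) := by
    rw [Real.rpow_sub_one hu.ne']
    field_simp
  have : (fun r' => wkernel d r' z)
      = fun x : ℝ => Real.pi ^ (-(d:ℝ)/2) * (1 - x ^ 2) ^ (-(d:ℝ)/2)
        * Real.exp (-‖z‖^2 / (1 - x^2)) := by
    funext x; rfl
  rw [this]
  refine (h6.congr_deriv (Eq.symm ?_)).congr_of_eventuallyEq (Filter.Eventually.of_forall fun x => ?_)
  rw [hA]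
  field_simp
  ring
  simp only [Pi.mul_apply]
  ring

lemma aux_bound (d : ℕ) (a r : ℝ) (ha : 0 < a) (hr0 : 0 ≤ r) (hr1 : r < 1) :
    Real.exp (-a/(1-r^2)) * r * ((1-r^2)^(-(d:ℝ)/2-1)) * |(d:ℝ) - 2*a/(1-r^2)|
      ≤ ((d:ℝ)+8) * ((1-r)^(-(d:ℝ)/2-1) * Real.exp (-(a/4)/(1-r))) := by
  set q : ℝ := -(d:ℝ)/2-1 with hq
  have hs : (0:ℝ) < 1 - r := by linarith
  have hu : (0:ℝ) < 1 - r^2 := by nlinarith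
  have hsu : 1 - r ≤ 1 - r^2 := by nlinarith
  have hu2 : 1 - r^2 ≤ 2*(1-r) := by nlinarith
  have hq0 : q ≤ 0 := by
    have : (0:ℝ) ≤ (d:ℝ) := Nat.cast_nonneg d
    rw [hq]; linarith
  have hA : (1-r^2)^q ≤ (1-r)^q := Real.rpow_le_rpow_of_nonpos hs hsu hq0
  have hApos : (0:ℝ) < (1-r^2)^q := Real.rpow_pos_of_pos hu q
  have hspos : (0:ℝ) < (1-r)^q := Real.rpow_pos_of_pos hs q
  have hE : Real.exp (-a/(1-r^2)) ≤ Real.exp (-a/(2*(1-r))) := by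
    apply Real.exp_le_exp.mpr
    have : a/(2*(1-r)) ≤ a/(1-r^2) := div_le_div_of_nonneg_left ha.le hu hu2
    rw [neg_div, neg_div]
    exact neg_le_neg this
  have habs : |(d:ℝ) - 2*a/(1-r^2)| ≤ (d:ℝ) + 2*a/(1-r^2) := by
    refine (abs_sub _ _).trans ?_
    rw [abs_of_nonneg (Nat.cast_nonneg d), abs_of_nonneg (by positivity)]
  have hfrac : 2*a/(1-r^2) ≤ 2*a/(1-r) := div_le_div_of_nonneg_left (by positivity) hs hsu
  set E2 : ℝ := Real.exp (-(a/4)/(1-r)) with hE2def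
  have hE2pos : 0 < E2 := Real.exp_pos _
  have hE2le1 : E2 ≤ 1 := by
    rw [hE2def, Real.exp_le_one_iff, neg_div]
    have : (0:ℝ) ≤ a/4/(1-r) := by positivity
    linarith
  have hsplit : Real.exp (-a/(2*(1-r))) = E2 * E2 := by
    rw [hE2def, ← Real.exp_add]
    congr 1
    field_simp
    ring
  have h8 : (2*a/(1-r)) * E2 ≤ 8 := by
    have hxe : a/4/(1-r) ≤ Real.exp (a/4/(1-r)) := by
      have := Real.add_one_le_exp (a/4/(1-r)); linarith
    have h1 : (a/4/(1-r)) * E2 ≤ 1 := by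
      rw [hE2def, show -(a/4)/(1-r) = -(a/4/(1-r)) by ring, Real.exp_neg, ← div_eq_mul_inv]
      exact div_le_one_of_le₀ hxe (Real.exp_pos _).le
    have h2 : (2*a/(1-r)) * E2 = 8 * ((a/4/(1-r)) * E2) := by ring
    linarith [h2, h1]
  -- chain
  have step1 : Real.exp (-a/(1-r^2)) * r * ((1-r^2)^q) * |(d:ℝ) - 2*a/(1-r^2)|
      ≤ Real.exp (-a/(2*(1-r))) * ((1-r)^q) * ((d:ℝ) + 2*a/(1-r)) := by
    have hXnn : (0:ℝ) ≤ (d:ℝ) + 2*a/(1-r^2) := by positivity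
    calc Real.exp (-a/(1-r^2)) * r * ((1-r^2)^q) * |(d:ℝ) - 2*a/(1-r^2)|
        ≤ Real.exp (-a/(1-r^2)) * 1 * ((1-r^2)^q) * ((d:ℝ) + 2*a/(1-r^2)) := by
          gcongr
      _ = Real.exp (-a/(1-r^2)) * ((1-r^2)^q) * ((d:ℝ) + 2*a/(1-r^2)) := by ring
      _ ≤ Real.exp (-a/(2*(1-r))) * ((1-r)^q) * ((d:ℝ) + 2*a/(1-r)) := by
          gcongr
  have step2 : Real.exp (-a/(2*(1-r))) * ((1-r)^q) * ((d:ℝ) + 2*a/(1-r))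
      ≤ ((d:ℝ)+8) * ((1-r)^q * E2) := by
    rw [hsplit]
    have hkey : E2 * ((d:ℝ) + 2*a/(1-r)) ≤ (d:ℝ) + 8 := by
      have hd0 : (0:ℝ) ≤ (d:ℝ) := Nat.cast_nonneg d
      nlinarith [h8, hE2le1, hE2pos.le, hd0]
    calc E2 * E2 * ((1-r)^q) * ((d:ℝ) + 2*a/(1-r))
        = ((1-r)^q * E2) * (E2 * ((d:ℝ) + 2*a/(1-r))) := by ring
      _ ≤ ((1-r)^q * E2) * ((d:ℝ) + 8) := by
          apply mul_le_mul_of_nonneg_left hkey (by positivity)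
      _ = ((d:ℝ)+8) * ((1-r)^q * E2) := by ring
  exact step1.trans step2

lemma aux_tail (d : ℕ) {c s : ℝ} (hc : 0 < c) (hs : 0 < s) :
    s ^ (-(d:ℝ)/2-1) * Real.exp (-c/s)
      ≤ (Nat.factorial (d+1) : ℝ) * c ^ (-(d:ℝ)-1) * s ^ ((d:ℝ)/2) := by
  have hx : (0:ℝ) < c/s := by positivity
  have hpow := Real.pow_div_factorial_le_exp (hx := hx.le) (n := d+1)
  have hppos : (0:ℝ) < (c/s)^(d+1) / (Nat.factorial (d+1):ℝ) := by positivity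
  have hexp : Real.exp (-(c/s)) ≤ (Nat.factorial (d+1):ℝ) * (s/c)^(d+1) := by
    rw [Real.exp_neg]
    refine (inv_anti₀ hppos hpow).trans_eq ?_
    rw [inv_div, div_pow, div_pow]
    field_simp
  have e1 : s ^ (-(d:ℝ)/2-1) * s ^ (((d+1:ℕ)):ℝ) = s ^ ((d:ℝ)/2) := by
    rw [← Real.rpow_add hs]; congr 1; push_cast; ring
  have e3 : (c ^ (((d+1:ℕ)):ℝ))⁻¹ = c ^ (-(d:ℝ)-1) := by
    rw [← Real.rpow_neg hc.le]; congr 1; push_cast; ring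
  calc s ^ (-(d:ℝ)/2-1) * Real.exp (-c/s)
      ≤ s ^ (-(d:ℝ)/2-1) * ((Nat.factorial (d+1):ℝ) * (s/c)^(d+1)) := by
        rw [show -c/s = -(c/s) by ring]
        exact mul_le_mul_of_nonneg_left hexp (Real.rpow_nonneg hs.le _)
    _ = (Nat.factorial (d+1):ℝ) * (s ^ (-(d:ℝ)/2-1) * s ^ (((d+1:ℕ)):ℝ))
          * (c ^ (((d+1:ℕ)):ℝ))⁻¹ := by
        rw [div_pow, ← Real.rpow_natCast s (d+1), ← Real.rpow_natCast c (d+1)]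
        ring
    _ = (Nat.factorial (d+1) : ℝ) * c ^ (-(d:ℝ)-1) * s ^ ((d:ℝ)/2) := by
        rw [e1, e3]; ring

set_option maxHeartbeats 2000000 in
theorem stmt5 (d : ℕ) :
    ∃ C : ℝ, 0 < C ∧ ∀ z : EuclideanSpace ℝ (Fin d), z ≠ 0 →
      (∫ r in (0:ℝ)..1, |deriv (fun r' => wkernel d r' z) r|) ≤ C * ‖z‖ ^ (-(d : ℝ)) := by
  by_cases hd : d = 0
  · subst hd
    exact ⟨1, one_pos, fun z hz => absurd (Subsingleton.elim z 0) hz⟩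
  have hd0 : (0:ℝ) < (d:ℝ) := by exact_mod_cast Nat.pos_of_ne_zero hd
  have hd1 : (1:ℝ) ≤ (d:ℝ) := by exact_mod_cast Nat.one_le_iff_ne_zero.mpr hd
  set P : ℝ := Real.pi ^ (-(d:ℝ)/2) with hP
  have hPpos : 0 < P := Real.rpow_pos_of_pos Real.pi_pos _
  set K : ℝ := P * ((d:ℝ)+8) with hK
  have hKpos : 0 < K := by positivity
  set N : ℝ := (Nat.factorial (d+1) : ℝ) with hN
  have hNpos : 0 < N := by
    rw [hN]; exact_mod_cast Nat.factorial_pos (d+1)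
  refine ⟨K * (2 + N) * 2^d, by positivity, ?_⟩
  intro z hz
  have ha : (0:ℝ) < ‖z‖^2 := by
    have := norm_pos_iff.mpr hz
    positivity
  set c : ℝ := ‖z‖^2/4 with hcDef
  have hc : 0 < c := by positivity
  set g : ℝ → ℝ := fun r' => wkernel d r' z with hg
  -- pointwise bound
  have key1 : ∀ r : ℝ, 0 ≤ r → r < 1 →
      |deriv g r| ≤ K * ((1-r)^(-(d:ℝ)/2-1) * Real.exp (-c/(1-r))) := by
    intro r h0 h1
    have hu : 0 < 1 - r^2 := by nlinarith
    have hD := (wkernel_hasDerivAt d z hu).deriv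
    rw [hg]
    rw [hD]
    have hnn : (0:ℝ) ≤ Real.pi ^ (-(d:ℝ)/2) * Real.exp (-‖z‖^2/(1-r^2)) * r
        * ((1-r^2) ^ (-(d:ℝ)/2 - 1)) :=
      mul_nonneg (mul_nonneg (mul_nonneg (Real.rpow_nonneg Real.pi_pos.le _)
        (Real.exp_pos _).le) h0) (Real.rpow_nonneg hu.le _)
    rw [abs_mul, abs_of_nonneg hnn]
    have aux := aux_bound d (‖z‖^2) r ha h0 h1
    have hmul := mul_le_mul_of_nonneg_left aux hPpos.le
    calc Real.pi ^ (-(d:ℝ)/2) * Real.exp (-‖z‖^2/(1-r^2)) * r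
          * ((1-r^2) ^ (-(d:ℝ)/2 - 1)) * |(d:ℝ) - 2*‖z‖^2/(1-r^2)|
        = P * (Real.exp (-‖z‖^2/(1-r^2)) * r * ((1-r^2)^(-(d:ℝ)/2-1))
            * |(d:ℝ) - 2*‖z‖^2/(1-r^2)|) := by rw [hP]; ring
      _ ≤ P * (((d:ℝ)+8) * ((1-r)^(-(d:ℝ)/2-1) * Real.exp (-(‖z‖^2/4)/(1-r)))) := hmul
      _ = K * ((1-r)^(-(d:ℝ)/2-1) * Real.exp (-c/(1-r))) := by
          rw [hK, hcDef]; ring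
  have key2 : ∀ r : ℝ, 0 ≤ r → r < 1 →
      |deriv g r| ≤ K * (N * c^(-(d:ℝ)-1) * (1-r)^((d:ℝ)/2)) := by
    intro r h0 h1
    refine (key1 r h0 h1).trans ?_
    have := aux_tail d hc (by linarith : (0:ℝ) < 1 - r)
    rw [hN]
    exact mul_le_mul_of_nonneg_left this hKpos.le
  have key3 : ∀ r : ℝ, 0 ≤ r → r < 1 →
      |deriv g r| ≤ K * (N * c^(-(d:ℝ)-1)) := by
    intro r h0 h1
    refine (key2 r h0 h1).trans ?_
    have h1r : (1-r)^((d:ℝ)/2) ≤ 1 :=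
      Real.rpow_le_one (by linarith) (by linarith) (by positivity)
    have hcp : (0:ℝ) ≤ c^(-(d:ℝ)-1) := Real.rpow_nonneg hc.le _
    calc K * (N * c^(-(d:ℝ)-1) * (1-r)^((d:ℝ)/2))
        ≤ K * (N * c^(-(d:ℝ)-1) * 1) := by
          apply mul_le_mul_of_nonneg_left _ hKpos.le
          apply mul_le_mul_of_nonneg_left h1r (by positivity)
      _ = K * (N * c^(-(d:ℝ)-1)) := by ring
  set M : ℝ := K * (N * c^(-(d:ℝ)-1)) with hM
  -- integrability
  have hmeasIoo : AEStronglyMeasurable (fun r => |deriv g r|)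
      (volume.restrict (Set.Ioo (0:ℝ) 1)) :=
    ((measurable_deriv g).abs).aestronglyMeasurable.restrict
  have hIntIoo : IntegrableOn (fun r => |deriv g r|) (Set.Ioo (0:ℝ) 1) := by
    apply Integrable.mono' (integrable_const M) hmeasIoo
    filter_upwards [ae_restrict_mem measurableSet_Ioo] with r hr
    rw [Real.norm_eq_abs, abs_abs]
    exact key3 r hr.1.le hr.2
  have hIntIoc : IntegrableOn (fun r => |deriv g r|) (Set.Ioc (0:ℝ) 1) :=
    hIntIoo.congr_set_ae Ioo_ae_eq_Ioc.symm
  have hII : IntervalIntegrable (fun r => |deriv g r|) volume 0 1 :=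
    (intervalIntegrable_iff_integrableOn_Ioc_of_le zero_le_one).mpr hIntIoc
  -- main bound
  have main : (∫ r in (0:ℝ)..1, |deriv g r|) ≤ K * (2+N) * c^(-(d:ℝ)/2) := by
    by_cases hc1 : 1 ≤ c
    · have h1 : (∫ r in (0:ℝ)..1, |deriv g r|) = ∫ r in Set.Ioo (0:ℝ) 1, |deriv g r| := by
        rw [intervalIntegral.integral_of_le zero_le_one, integral_Ioc_eq_integral_Ioo]
      rw [h1]
      have hce : c^(-(d:ℝ)-1) ≤ c^(-(d:ℝ)/2) :=
        Real.rpow_le_rpow_of_exponent_le hc1 (by linarith)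
      calc ∫ r in Set.Ioo (0:ℝ) 1, |deriv g r| ≤ ∫ _r in Set.Ioo (0:ℝ) 1, M := by
            apply setIntegral_mono_on hIntIoo (integrableOn_const
              (measure_Ioo_lt_top.ne)) measurableSet_Ioo
            intro x hx; exact key3 x hx.1.le hx.2
        _ = M := by
            rw [setIntegral_const, Measure.real, Real.volume_Ioo]
            norm_num
        _ ≤ K * (2+N) * c^(-(d:ℝ)/2) := by
            rw [hM]
            calc K * (N * c^(-(d:ℝ)-1)) ≤ K * (N * c^(-(d:ℝ)/2)) := by
                  apply mul_le_mul_of_nonneg_left _ hKpos.le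
                  exact mul_le_mul_of_nonneg_left hce hNpos.le
              _ ≤ K * (2+N) * c^(-(d:ℝ)/2) := by
                  have : (0:ℝ) ≤ c^(-(d:ℝ)/2) := Real.rpow_nonneg hc.le _
                  nlinarith
    · push_neg at hc1
      set b : ℝ := 1 - c with hb
      have hb0 : 0 < b := by rw [hb]; linarith
      have hb1 : b < 1 := by rw [hb]; linarith
      have hII1 : IntervalIntegrable (fun r => |deriv g r|) volume 0 b := by
        apply hII.mono_set
        rw [Set.uIcc_of_le hb0.le, Set.uIcc_of_le zero_le_one]
        exact Set.Icc_subset_Icc le_rfl hb1.le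
      have hII2 : IntervalIntegrable (fun r => |deriv g r|) volume b 1 := by
        apply hII.mono_set
        rw [Set.uIcc_of_le hb1.le, Set.uIcc_of_le zero_le_one]
        exact Set.Icc_subset_Icc hb0.le le_rfl
      have hsplit : (∫ r in (0:ℝ)..1, |deriv g r|)
          = (∫ r in (0:ℝ)..b, |deriv g r|) + ∫ r in b..(1:ℝ), |deriv g r| :=
        (intervalIntegral.integral_add_adjacent_intervals hII1 hII2).symm
      -- piece 1
      have hcont : ContinuousOn (fun r : ℝ => (1-r)^(-(d:ℝ)/2-1)) (Set.uIcc 0 b) := by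
        apply ContinuousOn.rpow_const (continuousOn_const.sub continuousOn_id)
        intro x hx
        rw [Set.uIcc_of_le hb0.le] at hx
        left
        have : x ≤ b := hx.2
        rw [hb] at this
        intro hcontra
        simp only [Pi.sub_apply, id_eq] at hcontra
        nlinarith [hx.1]
      have hII1' : IntervalIntegrable (fun r : ℝ => K * (1-r)^(-(d:ℝ)/2-1)) volume 0 b :=
        (continuousOn_const.mul hcont).intervalIntegrable
      have hmono1 : (∫ r in (0:ℝ)..b, |deriv g r|)
          ≤ ∫ r in (0:ℝ)..b, K * (1-r)^(-(d:ℝ)/2-1) := by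
        apply intervalIntegral.integral_mono_on hb0.le hII1 hII1'
        intro x hx
        have hx1 : x < 1 := lt_of_le_of_lt hx.2 hb1
        refine (key1 x hx.1 hx1).trans ?_
        have hexp1 : Real.exp (-c/(1-x)) ≤ 1 := by
          rw [Real.exp_le_one_iff, neg_div]
          have : (0:ℝ) ≤ c/(1-x) := by
            apply div_nonneg hc.le; linarith
          linarith
        have hA : (0:ℝ) ≤ (1-x)^(-(d:ℝ)/2-1) := Real.rpow_nonneg (by linarith) _
        calc K * ((1-x)^(-(d:ℝ)/2-1) * Real.exp (-c/(1-x)))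
            ≤ K * ((1-x)^(-(d:ℝ)/2-1) * 1) := by
              apply mul_le_mul_of_nonneg_left _ hKpos.le
              exact mul_le_mul_of_nonneg_left hexp1 hA
          _ = K * (1-x)^(-(d:ℝ)/2-1) := by ring
      have hftc : (∫ r in (0:ℝ)..b, (1-r)^(-(d:ℝ)/2-1))
          = (2/(d:ℝ))*(1-b)^(-(d:ℝ)/2) - (2/(d:ℝ))*(1-(0:ℝ))^(-(d:ℝ)/2) := by
        refine intervalIntegral.integral_eq_sub_of_hasDerivAt
          (f := fun r : ℝ => 2/(d:ℝ) * (1-r)^(-(d:ℝ)/2)) ?_ ?_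
        · intro x hx
          rw [Set.uIcc_of_le hb0.le] at hx
          have h1x : (1:ℝ) - x ≠ 0 := by
            have : x ≤ b := hx.2
            rw [hb] at this
            intro hcontra
            nlinarith [hx.1]
          have hh := (((hasDerivAt_id x).const_sub 1).rpow_const
            (p := -(d:ℝ)/2) (Or.inl h1x)).const_mul (2/(d:ℝ))
          refine hh.congr_deriv (Eq.symm ?_)
          have hdne : (d:ℝ) ≠ 0 := ne_of_gt hd0
          field_simp
          ring
          rfl
        · exact hcont.intervalIntegrable
      have hpiece1 : (∫ r in (0:ℝ)..b, |deriv g r|) ≤ K * (2 * c^(-(d:ℝ)/2)) := by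
        refine hmono1.trans ?_
        rw [intervalIntegral.integral_const_mul, hftc]
        have h1b : (1:ℝ) - b = c := by rw [hb]; ring
        rw [h1b]
        have h10 : ((1:ℝ)-(0:ℝ))^(-(d:ℝ)/2) = 1 := by norm_num
        rw [h10]
        have hX0 : (0:ℝ) ≤ c^(-(d:ℝ)/2) := Real.rpow_nonneg hc.le _
        have h2d : 2/(d:ℝ) ≤ 2 := by
          rw [div_le_iff₀ hd0]; nlinarith
        have h2dpos : 0 < 2/(d:ℝ) := by positivity
        apply mul_le_mul_of_nonneg_left _ hKpos.le
        nlinarith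
      -- piece 2
      have h2eq : (∫ r in b..(1:ℝ), |deriv g r|) = ∫ r in Set.Ioo b 1, |deriv g r| := by
        rw [intervalIntegral.integral_of_le hb1.le, integral_Ioc_eq_integral_Ioo]
      have hIntIoo2 : IntegrableOn (fun r => |deriv g r|) (Set.Ioo b 1) := by
        apply hIntIoc.mono_set
        intro x hx
        exact ⟨by linarith [hx.1, hb0], hx.2.le⟩
      set M2 : ℝ := K * (N * c^(-(d:ℝ)-1) * c^((d:ℝ)/2)) with hM2
      have hpt2 : ∀ x ∈ Set.Ioo b 1, |deriv g x| ≤ M2 := by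
        intro x hx
        refine (key2 x (by linarith [hx.1, hb0]) hx.2).trans ?_
        rw [hM2]
        have hsc : (1-x)^((d:ℝ)/2) ≤ c^((d:ℝ)/2) := by
          apply Real.rpow_le_rpow (by linarith [hx.2]) _ (by positivity)
          have := hx.1
          rw [hb] at this
          linarith
        apply mul_le_mul_of_nonneg_left _ hKpos.le
        apply mul_le_mul_of_nonneg_left hsc
        positivity
      have hpiece2 : (∫ r in b..(1:ℝ), |deriv g r|) ≤ K * (N * c^(-(d:ℝ)/2)) := by
        rw [h2eq]
        calc ∫ r in Set.Ioo b 1, |deriv g r| ≤ ∫ _r in Set.Ioo b 1, M2 :=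
              setIntegral_mono_on hIntIoo2 (integrableOn_const
                (measure_Ioo_lt_top.ne)) measurableSet_Ioo hpt2
          _ = c * M2 := by
              rw [setIntegral_const, Measure.real, Real.volume_Ioo]
              rw [show (1:ℝ) - b = c by rw [hb]; ring]
              rw [ENNReal.toReal_ofReal hc.le, smul_eq_mul]
          _ = K * (N * c^(-(d:ℝ)/2)) := by
              rw [hM2]
              have hcomb : c * (c^(-(d:ℝ)-1) * c^((d:ℝ)/2)) = c^(-(d:ℝ)/2) := by
                nth_rewrite 1 [← Real.rpow_one c]
                rw [← Real.rpow_add hc, ← Real.rpow_add hc]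
                congr 1; ring
              calc c * (K * (N * c^(-(d:ℝ)-1) * c^((d:ℝ)/2)))
                  = K * (N * (c * (c^(-(d:ℝ)-1) * c^((d:ℝ)/2)))) := by ring
                _ = K * (N * c^(-(d:ℝ)/2)) := by rw [hcomb]
      rw [hsplit]
      have hX0 : (0:ℝ) ≤ c^(-(d:ℝ)/2) := Real.rpow_nonneg hc.le _
      calc (∫ r in (0:ℝ)..b, |deriv g r|) + ∫ r in b..(1:ℝ), |deriv g r|
          ≤ K * (2 * c^(-(d:ℝ)/2)) + K * (N * c^(-(d:ℝ)/2)) := add_le_add hpiece1 hpiece2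
        _ = K * (2+N) * c^(-(d:ℝ)/2) := by ring
  -- conversion to final form
  have h1 : c ^ (-(d:ℝ)/2) = (‖z‖^2:ℝ) ^ (-(d:ℝ)/2) / (4:ℝ) ^ (-(d:ℝ)/2) := by
    rw [hcDef, Real.div_rpow (by positivity) (by norm_num : (0:ℝ) ≤ 4)]
  have h2 : (4:ℝ) ^ (-(d:ℝ)/2) = ((2:ℝ)^d)⁻¹ := by
    rw [show (4:ℝ) = (2:ℝ)^((2:ℕ):ℝ) by
        rw [Real.rpow_natCast]; norm_num,
      ← Real.rpow_mul (by norm_num : (0:ℝ) ≤ 2)]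
    rw [show ((2:ℕ):ℝ) * (-(d:ℝ)/2) = -(d:ℝ) by push_cast; ring]
    rw [Real.rpow_neg (by norm_num : (0:ℝ) ≤ 2), Real.rpow_natCast]
  have h3 : (‖z‖^2:ℝ) ^ (-(d:ℝ)/2) = ‖z‖ ^ (-(d:ℝ)) := by
    rw [← Real.rpow_natCast ‖z‖ 2, ← Real.rpow_mul (norm_nonneg z)]
    congr 1; push_cast; ring
  have hconv : K * (2+N) * c^(-(d:ℝ)/2) = (K * (2 + N) * 2^d) * ‖z‖^(-(d:ℝ)) := by
    rw [h1, h2, h3]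
    field_simp
  rw [← hconv]
  exact main
end

section
/- There is a constant C = C(d) such that for every pair (x,y) ∈ ℝ^d×ℝ^d in the local region N_2 and every 0 < r < 1, one has |∂_r M_r(x,y)| ≤ C (1−r)^{−d/2−1} exp(−|x−y|²/(4(1−r))). -/
open MeasureTheory

lemma mehler_hasDerivAt (d : ℕ) (x y : EuclideanSpace ℝ (Fin d)) (r : ℝ)
    (hr1 : r < 1) (hr1' : -1 < r) :
    HasDerivAt (fun r' => mehler d r' x y)
      ((Real.pi ^ (-(d : ℝ) / 2) * ((-(2*r)) * (-(d : ℝ) / 2) * (1 - r ^ 2) ^ (-(d : ℝ) / 2 - 1))) *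
          Real.exp (-(r^2*‖x‖^2 - 2*r*(inner ℝ x y : ℝ) + ‖y‖^2) / (1 - r ^ 2))
        + (Real.pi ^ (-(d : ℝ) / 2) * (1 - r ^ 2) ^ (-(d : ℝ) / 2)) *
          (Real.exp (-(r^2*‖x‖^2 - 2*r*(inner ℝ x y : ℝ) + ‖y‖^2) / (1 - r ^ 2)) *
            ((-(2*r*‖x‖^2 - 2*(inner ℝ x y : ℝ)) * (1 - r ^ 2)
              - (-(r^2*‖x‖^2 - 2*r*(inner ℝ x y : ℝ) + ‖y‖^2)) * (-(2*r))) / (1 - r ^ 2) ^ 2))) r := by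
  set md : ℝ := -(d : ℝ) / 2 with hmd
  set c : ℝ := Real.pi ^ md with hc
  set p : ℝ := (inner ℝ x y : ℝ) with hp
  have hD0 : (0:ℝ) < 1 - r ^ 2 := by nlinarith
  have h1d : HasDerivAt (fun r' : ℝ => 1 - r' ^ 2) (-(2*r)) r := by
    simpa using ((hasDerivAt_pow 2 r).const_sub 1)
  have hA : HasDerivAt (fun r' : ℝ => (1 - r' ^ 2) ^ md) ((-(2*r)) * md * (1 - r ^ 2) ^ (md - 1)) r :=
    h1d.rpow_const (Or.inl hD0.ne')
  have hgd : HasDerivAt (fun r' : ℝ => r'^2*‖x‖^2 - 2*r'*p + ‖y‖^2) (2*r*‖x‖^2 - 2*p) r := by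
    have h1 : HasDerivAt (fun r' : ℝ => r'^2) (2*r) r := by simpa using hasDerivAt_pow 2 r
    have h2 : HasDerivAt (fun r' : ℝ => r'^2*‖x‖^2) (2*r*‖x‖^2) r := h1.mul_const _
    have h3 : HasDerivAt (fun r' : ℝ => 2*r'*p) (2*p) r := by
      simpa [mul_comm, mul_assoc] using ((hasDerivAt_id r).const_mul (2*p))
    simpa using (h2.sub h3).add_const (‖y‖^2)
  have hq := (hgd.neg.div h1d hD0.ne')
  have hE := hq.exp
  have hM := (hA.const_mul c).mul hE
  have hfun : (fun r' => mehler d r' x y)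
      = fun r' => c * (1 - r' ^ 2) ^ md * Real.exp (-(r'^2*‖x‖^2 - 2*r'*p + ‖y‖^2) / (1 - r' ^ 2)) := by
    funext r'
    have hn : ‖r' • x - y‖ ^ 2 = r'^2*‖x‖^2 - 2*r'*p + ‖y‖^2 := by
      rw [norm_sub_sq_real, norm_smul, real_inner_smul_left]
      simp [mul_pow, sq_abs, hp]; ring
    simp [mehler, hn, hc, hmd]
  rw [hfun]
  exact hM

set_option maxHeartbeats 1600000 in
theorem stmt6 (d : ℕ) :
    ∃ C : ℝ, 0 < C ∧ ∀ x y : EuclideanSpace ℝ (Fin d), (x, y) ∈ localRegion d 2 →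
      ∀ r : ℝ, 0 < r → r < 1 →
        |deriv (fun r' => mehler d r' x y) r|
          ≤ C * (1 - r) ^ (-(d : ℝ) / 2 - 1) * Real.exp (-‖x - y‖ ^ 2 / (4 * (1 - r))) := by
  refine ⟨Real.exp 5 * ((d : ℝ) + 104), by positivity, ?_⟩
  intro x y hxy r hr0 hr1
  have hxy' : ‖x - y‖ ≤ 2 / (1 + ‖x‖ + ‖y‖) := hxy
  have hderiv := (mehler_hasDerivAt d x y r hr1 (by linarith)).deriv
  rw [hderiv]
  clear hderiv hxy
  set md : ℝ := -(d : ℝ) / 2 with hmd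
  set p : ℝ := (inner ℝ x y : ℝ) with hp
  set a : ℝ := ‖x‖ with ha
  set b : ℝ := ‖y‖ with hb
  set u : ℝ := ‖x - y‖ with hu
  set δ : ℝ := 1 - r with hδ
  set c : ℝ := Real.pi ^ md with hc
  set g : ℝ := r^2*a^2 - 2*r*p + b^2 with hg
  set g' : ℝ := 2*r*a^2 - 2*p with hg'
  set D0 : ℝ := 1 - r ^ 2 with hD0
  set E : ℝ := Real.exp (-g / D0) with hE
  set P : ℝ := D0 ^ (md - 1) with hP
  -- facts that need the bodies
  have hgnorm : g = ‖r • x - y‖ ^ 2 := by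
    rw [norm_sub_sq_real, norm_smul, real_inner_smul_left]
    simp [mul_pow, sq_abs, hg, ha, hb, hp]; ring
  have hu2 : u^2 = a^2 - 2*p + b^2 := by
    rw [hu, ha, hb, hp]; exact norm_sub_sq_real x y
  have hap2 : (inner ℝ x (x - y) : ℝ) = a^2 - p := by
    rw [inner_sub_right, real_inner_self_eq_norm_sq, ← ha, ← hp]
  have hsmul : r • x - y = r • (x - y) + (-δ) • y := by
    rw [hδ]; module
  clear_value md p a b u δ c g g' D0 E P
  have hdnn : (0:ℝ) ≤ (d:ℝ) := Nat.cast_nonneg d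
  have hδ0 : (0:ℝ) < δ := by rw [hδ]; linarith
  have hδ1 : δ ≤ 1 := by rw [hδ]; linarith
  have hD0pos : (0:ℝ) < D0 := by rw [hD0]; nlinarith
  have hD0ne : D0 ≠ 0 := hD0pos.ne'
  have hδD0 : δ ≤ D0 := by rw [hδ, hD0]; nlinarith
  have hD0eq : D0 = δ * (1 + r) := by rw [hδ, hD0]; ring
  have h1r : (0:ℝ) < 1 + r := by linarith
  have h1rne : (1:ℝ) + r ≠ 0 := by linarith
  have ha0 : 0 ≤ a := ha ▸ norm_nonneg _
  have hb0 : 0 ≤ b := hb ▸ norm_nonneg _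
  have hu0 : 0 ≤ u := hu ▸ norm_nonneg _
  -- locality
  have hloc : u * (1 + a + b) ≤ 2 := by
    have h1 : (0:ℝ) < 1 + a + b := by linarith
    have h2 : u ≤ 2 / (1 + a + b) := hxy'
    calc u * (1 + a + b) ≤ (2 / (1 + a + b)) * (1 + a + b) :=
          mul_le_mul_of_nonneg_right h2 (le_of_lt h1)
      _ = 2 := by field_simp
  have hu2' : u ≤ 2 := by
    linarith only [hloc, mul_nonneg hu0 ha0, mul_nonneg hu0 hb0]
  have hu4 : u^2 ≤ 4 := by nlinarith only [hu2', hu0]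
  have hau : a * u ≤ 2 := by
    linarith only [hloc, hu0, mul_nonneg hu0 hb0]
  have huab : u * (a + b) ≤ 2 := by linarith only [hloc, hu0]
  have hg0 : 0 ≤ g := by rw [hgnorm]; positivity
  -- T, S, Q
  set T : ℝ := u^2/δ with hT
  set S : ℝ := T/12 + δ*a^2/2 with hS
  clear_value T S
  have hT0 : 0 ≤ T := by rw [hT]; exact div_nonneg (sq_nonneg u) hδ0.le
  have hδa2 : 0 ≤ δ*a^2 := mul_nonneg hδ0.le (sq_nonneg a)
  have hS0 : 0 ≤ S := by rw [hS]; linarith only [hT0, hδa2]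
  have hTδ : T * δ = u^2 := by rw [hT]; field_simp
  set Q : ℝ := g / D0 with hQ
  clear_value Q
  have hQ0 : 0 ≤ Q := by rw [hQ]; exact div_nonneg hg0 hD0pos.le
  -- bound on |g'|
  have hap : |a^2 - p| ≤ 2 := by
    have h2 := abs_real_inner_le_norm x (x - y)
    rw [hap2, ← ha, ← hu] at h2
    nlinarith only [h2, hau, hu0, ha0, abs_nonneg (a^2 - p)]
  have hap' := abs_le.mp hap
  have hra2 : r*a^2 = a^2 - δ*a^2 := by rw [hδ]; ring
  have hg'bound : |g'| ≤ 4 + 4*S := by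
    rw [hg', hS, abs_le]
    constructor <;> nlinarith only [hap'.1, hap'.2, hT0, hδa2, hra2]
  -- upper bound on Q
  have hgle : g ≤ (r*u + δ*b)^2 := by
    have h2 : ‖r • x - y‖ ≤ r * u + δ * b := by
      rw [hsmul]
      calc ‖r • (x - y) + (-δ) • y‖ ≤ ‖r • (x - y)‖ + ‖(-δ) • y‖ := norm_add_le _ _
        _ = |r| * u + |(-δ)| * b := by rw [norm_smul, norm_smul, ← hu, ← hb]; rfl
        _ = r * u + δ * b := by rw [abs_of_pos hr0, abs_neg, abs_of_pos hδ0]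
    calc g = ‖r • x - y‖^2 := hgnorm
      _ ≤ (r * u + δ * b)^2 := pow_le_pow_left₀ (norm_nonneg _) h2 2
  have hgle2 : g ≤ 2*u^2 + 2*δ^2*b^2 := by
    nlinarith only [hgle, sq_nonneg (u - δ*b),
      mul_nonneg (mul_nonneg (sq_nonneg u) hr0.le) (by linarith : (0:ℝ) ≤ 1 - r),
      mul_nonneg (sq_nonneg u) (by linarith : (0:ℝ) ≤ 1 - r),
      mul_nonneg (mul_nonneg (mul_nonneg hu0 hδ0.le) hb0) (by linarith : (0:ℝ) ≤ 1 - r)]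
  have hbau : b ≤ a + u := by
    have h1 : y = x - (x - y) := by abel
    calc b = ‖x - (x - y)‖ := by rw [hb, ← h1]
      _ ≤ ‖x‖ + ‖x - y‖ := norm_sub_le _ _
      _ = a + u := by rw [← ha, ← hu]
  have hb2 : b^2 ≤ 2*a^2 + 8 := by
    nlinarith only [mul_self_le_mul_self hb0 hbau, hu4, hu0, ha0, sq_nonneg (a - u)]
  have hQbound : Q ≤ 32*S + 16 := by
    have h2 : g / δ ≤ 32*S + 16 := by
      rw [div_le_iff₀ hδ0, hS]
      nlinarith only [hgle2, hTδ, mul_le_mul_of_nonneg_left hb2 (sq_nonneg δ),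
        mul_le_mul_of_nonneg_left hδ1 hδ0.le, sq_nonneg u, hδ0.le,
        mul_nonneg (sq_nonneg δ) (sq_nonneg a)]
    have h1 : Q ≤ g / δ := by
      rw [hQ, div_le_div_iff₀ hD0pos hδ0]
      exact mul_le_mul_of_nonneg_left hδD0 hg0
    linarith only [h1, h2]
  -- lower bound on Q
  have hba2 : -2 ≤ b^2 - a^2 := by
    have h1 : |b - a| ≤ u := by
      rw [hb, ha, hu, norm_sub_rev x y]
      exact abs_norm_sub_norm_le y x
    have h2 : -u ≤ b - a := by linarith only [(abs_le.mp h1).1]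
    nlinarith only [mul_le_mul_of_nonneg_right h2 (by linarith : (0:ℝ) ≤ a + b), huab]
  have hsplit : Q = r*u^2/D0 + (b^2 - r*a^2)/(1+r) := by
    have hD0ne2 : (1:ℝ) - r^2 ≠ 0 := by rw [← hD0]; exact hD0ne
    rw [hQ, hu2, hg, hD0]
    field_simp
    ring
  have hpart1 : T/3 - 3 ≤ r*u^2/D0 := by
    rw [le_div_iff₀ hD0pos]
    have e : (T/3 - 3) * D0 = u^2*(1+r)/3 - 3*D0 := by
      rw [hD0eq]; linear_combination ((1+r)/3) * hTδ
    rw [e, hD0]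
    rcases le_or_gt (1/2 : ℝ) r with hhalf | hhalf
    · nlinarith only [mul_nonneg (sq_nonneg u) (by linarith : (0:ℝ) ≤ 2*r - 1),
        mul_nonneg (by linarith : (0:ℝ) ≤ 1 - r) (by linarith : (0:ℝ) ≤ 1 + r)]
    · nlinarith only [mul_le_mul_of_nonneg_right hu4 (by linarith : (0:ℝ) ≤ 1 - 2*r),
        mul_le_mul_of_nonneg_left hhalf.le hr0.le, hr0.le, hr0]
  have hpart2 : δ*a^2/2 - 2 ≤ (b^2 - r*a^2)/(1+r) := by
    rw [le_div_iff₀ h1r, hδ]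
    nlinarith only [hba2, mul_nonneg (sq_nonneg a) (sq_nonneg (1-r)), hr0.le]
  have hQlow : T/4 + S - 5 ≤ Q := by
    rw [hsplit, hS]; linarith only [hpart1, hpart2]
  -- exponential bound
  have hEpos : 0 < E := by rw [hE]; exact Real.exp_pos _
  have hEbound : E ≤ Real.exp 5 * Real.exp (-u^2/(4*δ)) * Real.exp (-S) := by
    rw [hE, ← Real.exp_add, ← Real.exp_add]
    apply Real.exp_le_exp.mpr
    have h1 : -g/D0 = -Q := by rw [hQ]; ring
    have h2 : -u^2/(4*δ) = -(T/4) := by rw [hT]; ring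
    rw [h1]
    linarith only [hQlow, h2.le, h2.ge]
  have hF8 : Real.exp (-S) * (((d:ℝ)+36) + 68*S) ≤ (d:ℝ) + 104 := by
    have h1 : Real.exp (-S) ≤ 1 := by
      calc Real.exp (-S) ≤ Real.exp 0 := Real.exp_le_exp.mpr (by linarith only [hS0])
        _ = 1 := Real.exp_zero
    have h2 : S * Real.exp (-S) ≤ 1 := by
      rw [Real.exp_neg, ← div_eq_mul_inv, div_le_one (Real.exp_pos _)]
      linarith only [Real.add_one_le_exp S]
    nlinarith only [Real.exp_pos (-S), h1, h2, hdnn,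
      mul_le_mul_of_nonneg_left h1 hdnn]
  -- assembling
  have hcpos : 0 < c := by rw [hc]; exact Real.rpow_pos_of_pos Real.pi_pos _
  have hPpos : 0 < P := by rw [hP]; exact Real.rpow_pos_of_pos hD0pos _
  have hmd1 : md - 1 ≤ 0 := by rw [hmd]; linarith only [hdnn]
  have hc1 : c ≤ 1 := by
    rw [hc]
    exact Real.rpow_le_one_of_one_le_of_nonpos (by linarith only [Real.pi_gt_three])
      (by rw [hmd]; linarith only [hdnn])
  have hPle : P ≤ δ ^ (md - 1) := by
    rw [hP]; exact Real.rpow_le_rpow_of_nonpos hδ0 hδD0 hmd1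
  have hδPpos : 0 < δ ^ (md - 1) := Real.rpow_pos_of_pos hδ0 _
  have hpow : D0 ^ md = P * D0 := by
    rw [hP, ← Real.rpow_add_one hD0pos.ne' (md - 1)]
    congr 1; ring
  have hW : c * ((-(2*r)) * md * P) * E + (c * D0 ^ md) * (E * ((-g' * D0 - (-g) * (-(2*r))) / D0 ^ 2))
      = c * P * E * (r*(d:ℝ) - g' - 2*r*Q) := by
    rw [hpow, hQ, hmd]
    field_simp
    ring
  rw [hW]
  have hcPE : (0:ℝ) ≤ c * P * E := by positivity
  have hWabs : |r*(d:ℝ) - g' - 2*r*Q| ≤ (d:ℝ) + |g'| + 2*Q := by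
    rw [abs_le]
    constructor <;>
      nlinarith only [hQ0, le_abs_self g', neg_abs_le g',
        mul_nonneg hr0.le hQ0, mul_nonneg (by linarith : (0:ℝ) ≤ 1 - r) hQ0,
        mul_nonneg hr0.le hdnn, mul_nonneg (by linarith : (0:ℝ) ≤ 1 - r) hdnn]
  have hXle : (d:ℝ) + |g'| + 2*Q ≤ ((d:ℝ)+36) + 68*S := by
    linarith only [hg'bound, hQbound]
  have hXnn : (0:ℝ) ≤ (d:ℝ) + |g'| + 2*Q := by
    linarith only [abs_nonneg g', hdnn, hQ0]
  calc |c * P * E * (r*(d:ℝ) - g' - 2*r*Q)|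
      = c * P * E * |r*(d:ℝ) - g' - 2*r*Q| := by
        rw [abs_mul, abs_of_nonneg hcPE]
    _ ≤ c * P * E * ((d:ℝ) + |g'| + 2*Q) := mul_le_mul_of_nonneg_left hWabs hcPE
    _ ≤ 1 * (δ ^ (md - 1)) * (Real.exp 5 * Real.exp (-u^2/(4*δ)) * Real.exp (-S)) *
          (((d:ℝ)+36) + 68*S) := by
        apply mul_le_mul
        · apply mul_le_mul
          · exact mul_le_mul hc1 hPle hPpos.le zero_le_one
          · exact hEbound
          · exact hEpos.le
          · positivity
        · exact hXle
        · exact hXnn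
        · positivity
    _ = (Real.exp (-S) * (((d:ℝ)+36) + 68*S)) * (Real.exp 5 * (δ ^ (md - 1) * Real.exp (-u^2/(4*δ)))) := by
        ring
    _ ≤ ((d:ℝ) + 104) * (Real.exp 5 * (δ ^ (md - 1) * Real.exp (-u^2/(4*δ)))) := by
        apply mul_le_mul_of_nonneg_right hF8
        positivity
    _ = Real.exp 5 * ((d:ℝ) + 104) * δ ^ (md - 1) * Real.exp (-u^2/(4*δ)) := by ring
end

section
/- There is a constant C = C(d) such that for every pair (x,y) ∈ ℝ^d×ℝ^d in the local region N_2 with x ≠ y, ∫_0^1 |∂_r M_r(x,y)| dr ≤ C |x−y|^{−d}. -/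
open MeasureTheory Real

lemma aux_le_exp_half {t : ℝ} (ht : 0 ≤ t) : t ≤ Real.exp (t/2) := by
  have h := Real.add_one_le_exp (t/4)
  have h2 : Real.exp (t/2) = Real.exp (t/4) * Real.exp (t/4) := by
    rw [← Real.exp_add]; ring_nf
  have h3 := mul_le_mul h h (by linarith) (Real.exp_pos (t/4)).le
  nlinarith [sq_nonneg (t/4 - 1)]

lemma aux_sqrt_le_exp_half {t : ℝ} (ht : 0 ≤ t) : Real.sqrt t ≤ Real.exp (t/2) := by
  have h1 : Real.sqrt t ≤ 1 + t/2 := by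
    rw [show (1 : ℝ) + t/2 = Real.sqrt ((1+t/2)^2) from (Real.sqrt_sq (by linarith)).symm]
    apply Real.sqrt_le_sqrt; nlinarith
  have h2 := Real.add_one_le_exp (t/2)
  linarith

lemma aux_mul_exp {t : ℝ} (ht : 0 ≤ t) : t * Real.exp (-t) ≤ Real.exp (-(t/2)) := by
  have h := aux_le_exp_half ht
  calc t * Real.exp (-t) ≤ Real.exp (t/2) * Real.exp (-t) :=
        mul_le_mul_of_nonneg_right h (Real.exp_pos _).le
    _ = Real.exp (-(t/2)) := by rw [← Real.exp_add]; ring_nf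

lemma aux_sqrt_mul_exp {t : ℝ} (ht : 0 ≤ t) : Real.sqrt t * Real.exp (-t) ≤ Real.exp (-(t/2)) := by
  calc Real.sqrt t * Real.exp (-t) ≤ Real.exp (t/2) * Real.exp (-t) :=
        mul_le_mul_of_nonneg_right (aux_sqrt_le_exp_half ht) (Real.exp_pos _).le
    _ = Real.exp (-(t/2)) := by rw [← Real.exp_add]; ring_nf

lemma aux_sqrt_exp64 {s : ℝ} (hs : 0 ≤ s) : Real.sqrt s * Real.exp (-(s/64)) ≤ 8 := by
  have h1 : Real.sqrt s ≤ 8 * Real.exp (s/64) := by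
    have h2 : s ≤ 64 * Real.exp (s/32) := by
      have := Real.add_one_le_exp (s/32); nlinarith [Real.exp_pos (s/32)]
    calc Real.sqrt s ≤ Real.sqrt (64 * Real.exp (s/32)) := Real.sqrt_le_sqrt h2
      _ = 8 * Real.exp (s/64) := by
          rw [Real.sqrt_mul (by norm_num)]
          rw [show (64:ℝ) = 8^2 by norm_num, Real.sqrt_sq (by norm_num)]
          congr 1
          rw [show s/32 = (s/64) * 2 by ring, Real.exp_mul]
          rw [Real.sqrt_eq_rpow, ← Real.rpow_natCast _ 2, ← Real.rpow_mul (Real.exp_nonneg _)]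
          norm_num
  calc Real.sqrt s * Real.exp (-(s/64)) ≤ (8 * Real.exp (s/64)) * Real.exp (-(s/64)) := by
        apply mul_le_mul_of_nonneg_right h1 (Real.exp_pos _).le
    _ = 8 := by rw [mul_assoc, ← Real.exp_add]; simp


lemma aux_pow_le_exp {z : ℝ} (hz : 0 ≤ z) (n : ℕ) : z^n / n.factorial ≤ Real.exp z := by
  calc z^n / n.factorial ≤ ∑ i ∈ Finset.range (n+1), z^i / i.factorial := by
        apply Finset.single_le_sum (f := fun i => z^i / (i.factorial:ℝ))
          (fun i _ => by positivity) (Finset.self_mem_range_succ n)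
    _ ≤ Real.exp z := Real.sum_le_exp_of_nonneg hz _

-- derivative of the model function
lemma model_hasDeriv (c p A B C : ℝ) (r : ℝ) (hu : 0 < 1 - r^2) :
    HasDerivAt (fun s : ℝ => c * ((1-s^2)^p * Real.exp (-((s^2*A - 2*s*B + C)/(1-s^2)))))
      (c * Real.exp (-((r^2*A - 2*r*B + C)/(1-r^2))) * (1-r^2)^(p-1) *
        (-(2*r)*p - ((2*r*A - 2*B) + 2*r*((r^2*A - 2*r*B + C)/(1-r^2))))) r := by
  have hu' : HasDerivAt (fun s : ℝ => 1 - s^2) (-(2*r)) r := by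
    simpa using ((hasDerivAt_pow 2 r).const_sub 1)
  have hup : HasDerivAt (fun s : ℝ => (1-s^2)^p) (-(2*r) * p * (1-r^2)^(p-1)) r :=
    hu'.rpow_const (Or.inl hu.ne')
  have hQ : HasDerivAt (fun s : ℝ => s^2*A - 2*s*B + C) (2*r*A - 2*B) r := by
    have h1 := ((hasDerivAt_pow 2 r).mul_const A)
    have h2 := ((hasDerivAt_id r).const_mul (2*B))
    have := (h1.sub (by simpa using h2.mul_const 1)).add_const C
    refine (this.congr_deriv (by norm_num)).congr_of_eventuallyEq (Filter.Eventually.of_forall fun s => ?_)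
    simp only [Pi.sub_apply]; ring
  have hE : HasDerivAt (fun s : ℝ => -((s^2*A - 2*s*B + C)/(1-s^2)))
      (-(((2*r*A - 2*B) * (1-r^2) - (r^2*A - 2*r*B + C) * (-(2*r)))/(1-r^2)^2)) r :=
    (hQ.div hu' hu.ne').neg
  have hexp := hE.exp
  have := (hup.mul hexp).const_mul c
  refine this.congr_deriv ?_
  set u := 1 - r^2
  set Q := r^2*A - 2*r*B + C
  set Q' := 2*r*A - 2*B
  have hup1 : u ^ (p-1) = u ^ p / u := Real.rpow_sub_one hu.ne' p
  have hup2 : u ^ p = u ^ (p-1) * u := by rw [hup1]; field_simp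
  rw [hup2]
  have h2 : (0:ℝ) < u^2 := by positivity
  field_simp
  ring



lemma norm_smul_sub_sq (d : ℕ) (x y : EuclideanSpace ℝ (Fin d)) (s : ℝ) :
    ‖s • x - y‖ ^ 2 = s^2*‖x‖^2 - 2*s*(inner ℝ x y : ℝ) + ‖y‖^2 := by
  rw [norm_sub_sq_real, norm_smul, real_inner_smul_left]
  simp [Real.norm_eq_abs, mul_pow, sq_abs]
  ring

lemma mehler_eq_model (d : ℕ) (x y : EuclideanSpace ℝ (Fin d)) :
    (fun r' => mehler d r' x y) = (fun s : ℝ =>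
      (Real.pi ^ (-(d:ℝ)/2)) * ((1-s^2)^(-(d:ℝ)/2) *
        Real.exp (-((s^2*‖x‖^2 - 2*s*(inner ℝ x y : ℝ) + ‖y‖^2)/(1-s^2))))) := by
  funext s
  unfold mehler
  rw [mul_assoc, norm_smul_sub_sq]
  simp [neg_div]
  exact Or.inl (Or.inl (by ring))

set_option maxHeartbeats 1000000 in
lemma real_est (d : ℕ) (hd : 1 ≤ d) (nx δ B nz ny2 r u Q E : ℝ)
    (hnx : 0 ≤ nx) (hnz0 : 0 ≤ nz) (hδ0 : 0 ≤ δ)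
    (hδx : δ * nx ≤ 2) (hδ2 : δ ≤ 2)
    (hr0 : 0 ≤ r) (hr1 : r < 1)
    (hudef : u = 1 - r^2) (hQdef : Q = r^2*nx^2 - 2*r*B + ny2) (hEdef : E = Q/u)
    (hQnz : Q = nz^2)
    (hCS : |r*nx^2 - B| ≤ nx*nz)
    (hrev : (1-r)*nx - δ ≤ nz) (hrev2 : δ - (1-r)*nx ≤ nz) :
    |(Real.pi ^ (-(d:ℝ)/2)) * Real.exp (-(Q/u)) * u^((-(d:ℝ)/2)-1) *
        (-(2*r)*(-(d:ℝ)/2) - ((2*r*nx^2 - 2*B) + 2*r*(Q/u)))| ≤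
      2*((d:ℝ)+18) * (1-r)^(-(d:ℝ)/2-1) * Real.exp (-(δ^2/32)/(1-r)) := by
  have hu : 0 < u := by rw [hudef]; nlinarith
  have ht : 0 < 1 - r := by linarith
  have hQ0 : 0 ≤ Q := by rw [hQnz]; positivity
  have hE0 : 0 ≤ E := by rw [hEdef]; exact div_nonneg hQ0 hu.le
  have hQEu : Q = E * u := by rw [hEdef]; field_simp
  have hu2t : u ≤ 2*(1-r) := by rw [hudef]; nlinarith
  have htu : 1 - r ≤ u := by rw [hudef]; nlinarith
  have hnzE : nz = Real.sqrt E * Real.sqrt u := by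
    rw [← Real.sqrt_mul hE0, ← hQEu, hQnz, Real.sqrt_sq hnz0]
  -- claim W
  have hW : nx * Real.sqrt u * Real.exp (-(E/4)) ≤ 8 := by
    by_cases hcase : (1-r)*nx ≤ 2*δ
    · have hsqu : (Real.sqrt u)^2 = u := Real.sq_sqrt hu.le
      have h3 : nx * Real.sqrt u ≤ 3 := by
        nlinarith [mul_nonneg hnx (Real.sqrt_nonneg u), Real.sqrt_nonneg u]
      have hexp1 : Real.exp (-(E/4)) ≤ 1 := Real.exp_le_one_iff.mpr (by linarith)
      nlinarith [mul_nonneg hnx (Real.sqrt_nonneg u), Real.exp_pos (-(E/4))]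
    · push_neg at hcase
      have h1 : (1-r)*nx/2 ≤ nz := by linarith
      have h2 : (1-r)^2*nx^2/4 ≤ Q := by rw [hQnz]; nlinarith
      have hE1 : u*nx^2/16 ≤ E := by
        rw [hEdef, le_div_iff₀ hu]
        have husq : u*u ≤ 4*((1-r)*(1-r)) := by nlinarith
        nlinarith [sq_nonneg nx, h2, husq, mul_nonneg hu.le (sq_nonneg nx)]
      have hmono : Real.exp (-(E/4)) ≤ Real.exp (-((u*nx^2)/64)) :=
        Real.exp_le_exp.mpr (by linarith)
      have h0 : 0 ≤ nx * Real.sqrt u := mul_nonneg hnx (Real.sqrt_nonneg u)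
      calc nx * Real.sqrt u * Real.exp (-(E/4))
          ≤ nx * Real.sqrt u * Real.exp (-((u*nx^2)/64)) :=
            mul_le_mul_of_nonneg_left hmono h0
        _ = Real.sqrt (u*nx^2) * Real.exp (-((u*nx^2)/64)) := by
            rw [Real.sqrt_mul hu.le, Real.sqrt_sq hnx]; ring
        _ ≤ 8 := aux_sqrt_exp64 (by positivity)
  -- claim V
  have hV : Real.exp (-(E/4)) ≤ 2 * Real.exp (-(δ^2/(16*u))) := by
    by_cases hcase : (1-r)*nx ≤ δ/2
    · have h1 : δ/2 ≤ nz := by linarith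
      have h2 : δ^2/4 ≤ Q := by rw [hQnz]; nlinarith
      have h3 : δ^2/(16*u) ≤ E/4 := by
        rw [hEdef, div_le_div_iff₀ (by positivity) (by norm_num : (0:ℝ) < 4)]
        rw [div_mul_eq_mul_div, le_div_iff₀ hu]
        nlinarith
      have h4 := Real.exp_le_exp.mpr (neg_le_neg h3)
      nlinarith [Real.exp_pos (-(δ^2/(16*u)))]
    · push_neg at hcase
      have h1 : δ^2 ≤ 4*u := by nlinarith
      have h2 : δ^2/(16*u) ≤ 1/4 := by
        rw [div_le_iff₀ (by positivity)]; nlinarith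
      have h3 : (3:ℝ)/4 ≤ Real.exp (-(δ^2/(16*u))) := by
        have := Real.add_one_le_exp (-(δ^2/(16*u))); linarith
      have h4 : Real.exp (-(E/4)) ≤ 1 := Real.exp_le_one_iff.mpr (by linarith)
      linarith
  -- the inner sum S
  set S : ℝ := -(2*r)*(-(d:ℝ)/2) - ((2*r*nx^2 - 2*B) + 2*r*(Q/u)) with hS
  have hCS' := abs_le.mp hCS
  have hEQu : Q/u = E := hEdef.symm
  have hSbound : |S| ≤ (d:ℝ) + 2*(nx*nz) + 2*E := by
    rw [hS, hEQu, abs_le]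
    have hd1 : (1:ℝ) ≤ (d:ℝ) := by exact_mod_cast hd
    constructor
    · nlinarith [hCS'.1, hCS'.2]
    · nlinarith [hCS'.1, hCS'.2]
  have hT1 : (d:ℝ) * Real.exp (-E) ≤ (d:ℝ) * Real.exp (-(E/4)) :=
    mul_le_mul_of_nonneg_left (Real.exp_le_exp.mpr (by linarith)) (by positivity)
  have hT2 : 2*E*Real.exp (-E) ≤ 2*Real.exp (-(E/4)) := by
    have h1 := aux_mul_exp hE0
    have h2 : Real.exp (-(E/2)) ≤ Real.exp (-(E/4)) := Real.exp_le_exp.mpr (by linarith)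
    nlinarith
  have hT3 : 2*(nx*nz)*Real.exp (-E) ≤ 16*Real.exp (-(E/4)) := by
    have h1 := aux_sqrt_mul_exp hE0
    have h2 : nz * Real.exp (-E) ≤ Real.sqrt u * Real.exp (-(E/2)) := by
      rw [hnzE]
      calc Real.sqrt E * Real.sqrt u * Real.exp (-E)
          = Real.sqrt u * (Real.sqrt E * Real.exp (-E)) := by ring
        _ ≤ Real.sqrt u * Real.exp (-(E/2)) :=
            mul_le_mul_of_nonneg_left h1 (Real.sqrt_nonneg u)
    have h3 : Real.exp (-(E/2)) = Real.exp (-(E/4)) * Real.exp (-(E/4)) := by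
      rw [← Real.exp_add]; ring_nf
    calc 2*(nx*nz)*Real.exp (-E) = 2*nx*(nz*Real.exp (-E)) := by ring
      _ ≤ 2*nx*(Real.sqrt u * Real.exp (-(E/2))) :=
          mul_le_mul_of_nonneg_left h2 (by positivity)
      _ = 2*(nx*Real.sqrt u*Real.exp (-(E/4)))*Real.exp (-(E/4)) := by rw [h3]; ring
      _ ≤ 2*8*Real.exp (-(E/4)) := by
          apply mul_le_mul_of_nonneg_right _ (Real.exp_pos _).le
          have h0 : 0 ≤ nx*Real.sqrt u*Real.exp (-(E/4)) := by positivity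
          linarith
      _ = 16*Real.exp (-(E/4)) := by ring
  -- main chain
  have hexpE : Real.exp (-(Q/u)) = Real.exp (-E) := by rw [hEQu]
  have hupos : (0:ℝ) < u^((-(d:ℝ)/2)-1) := Real.rpow_pos_of_pos hu _
  have hcpos : (0:ℝ) < Real.pi ^ (-(d:ℝ)/2) := Real.rpow_pos_of_pos Real.pi_pos _
  have hc1 : (Real.pi ^ (-(d:ℝ)/2)) ≤ 1 :=
    Real.rpow_le_one_of_one_le_of_nonpos (by linarith [Real.pi_gt_three]) (by
      have : (0:ℝ) ≤ (d:ℝ) := Nat.cast_nonneg d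
      linarith)
  have hu1 : u^((-(d:ℝ)/2)-1) ≤ (1-r)^((-(d:ℝ)/2)-1) := by
    apply Real.rpow_le_rpow_of_nonpos ht htu
    have : (0:ℝ) ≤ (d:ℝ) := Nat.cast_nonneg d
    linarith
  have hexp2 : Real.exp (-(δ^2/(16*u))) ≤ Real.exp (-(δ^2/32)/(1-r)) := by
    apply Real.exp_le_exp.mpr
    rw [neg_div]
    apply neg_le_neg
    rw [div_div]
    apply div_le_div_of_nonneg_left (by positivity) (by positivity)
    linarith
  have habs : |(Real.pi ^ (-(d:ℝ)/2)) * Real.exp (-(Q/u)) * u^((-(d:ℝ)/2)-1) * S| =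
      (Real.pi ^ (-(d:ℝ)/2)) * Real.exp (-(Q/u)) * u^((-(d:ℝ)/2)-1) * |S| := by
    rw [abs_mul]
    congr 1
    exact abs_of_pos (by positivity)
  rw [habs, hexpE]
  have hAsum : Real.exp (-E) * |S| ≤ ((d:ℝ)+18) * Real.exp (-(E/4)) := by
    have h5 : Real.exp (-E) * |S| ≤ Real.exp (-E) * ((d:ℝ) + 2*(nx*nz) + 2*E) :=
      mul_le_mul_of_nonneg_left hSbound (Real.exp_pos _).le
    have h6 : Real.exp (-E) * ((d:ℝ) + 2*(nx*nz) + 2*E) =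
        (d:ℝ)*Real.exp (-E) + 2*(nx*nz)*Real.exp (-E) + 2*E*Real.exp (-E) := by ring
    linarith [hT1, hT2, hT3, h5, h6.le, h6.ge]
  calc (Real.pi ^ (-(d:ℝ)/2)) * Real.exp (-E) * u^((-(d:ℝ)/2)-1) * |S|
      ≤ 1 * Real.exp (-E) * (1-r)^((-(d:ℝ)/2)-1) * |S| := by
        gcongr <;> first | exact hc1 | exact hu1 | positivity
    _ = (1-r)^((-(d:ℝ)/2)-1) * (Real.exp (-E) * |S|) := by ring
    _ ≤ (1-r)^((-(d:ℝ)/2)-1) * (((d:ℝ)+18) * Real.exp (-(E/4))) := by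
        apply mul_le_mul_of_nonneg_left hAsum (Real.rpow_nonneg ht.le _)
    _ ≤ (1-r)^((-(d:ℝ)/2)-1) * (((d:ℝ)+18) * (2*Real.exp (-(δ^2/(16*u))))) := by
        apply mul_le_mul_of_nonneg_left _ (Real.rpow_nonneg ht.le _)
        apply mul_le_mul_of_nonneg_left hV (by positivity)
    _ ≤ (1-r)^((-(d:ℝ)/2)-1) * (((d:ℝ)+18) * (2*Real.exp (-(δ^2/32)/(1-r)))) := by
        apply mul_le_mul_of_nonneg_left _ (Real.rpow_nonneg ht.le _)
        apply mul_le_mul_of_nonneg_left _ (by positivity)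
        apply mul_le_mul_of_nonneg_left hexp2 (by norm_num)
    _ = 2*((d:ℝ)+18) * (1-r)^(-(d:ℝ)/2-1) * Real.exp (-(δ^2/32)/(1-r)) := by ring

lemma key_bound (d : ℕ) (hd : 1 ≤ d) (x y : EuclideanSpace ℝ (Fin d))
    (hloc : ‖x - y‖ ≤ 2 / (1 + ‖x‖ + ‖y‖)) (r : ℝ) (hr0 : 0 ≤ r) (hr1 : r < 1) :
    |deriv (fun r' => mehler d r' x y) r| ≤
      2*((d:ℝ)+18) * (1-r)^(-(d:ℝ)/2-1) * Real.exp (-(‖x-y‖^2/32)/(1-r)) := by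
  have hu : 0 < 1 - r^2 := by nlinarith
  have ht : 0 < 1 - r := by linarith
  rw [mehler_eq_model]
  rw [(model_hasDeriv (Real.pi ^ (-(d:ℝ)/2)) (-(d:ℝ)/2) (‖x‖^2) (inner ℝ x y) (‖y‖^2) r hu).deriv]
  have hden : (0:ℝ) < 1 + ‖x‖ + ‖y‖ := by positivity
  have hloc' : ‖x-y‖ * (1 + ‖x‖ + ‖y‖) ≤ 2 := by
    rw [← le_div_iff₀ hden]; exact hloc
  have hδx : ‖x-y‖ * ‖x‖ ≤ 2 := by
    nlinarith [norm_nonneg x, norm_nonneg y, norm_nonneg (x-y)]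
  have hδ2 : ‖x-y‖ ≤ 2 := by
    nlinarith [norm_nonneg x, norm_nonneg y, norm_nonneg (x-y)]
  have hCS : |r*‖x‖^2 - (inner ℝ x y : ℝ)| ≤ ‖x‖*‖r • x - y‖ := by
    have h1 : r*‖x‖^2 - (inner ℝ x y : ℝ) = (inner ℝ x (r • x - y) : ℝ) := by
      rw [inner_sub_right, real_inner_smul_right, real_inner_self_eq_norm_sq]
    rw [h1]
    exact abs_real_inner_le_norm x _
  have hsplit : r • x - y = (x - y) - (1-r) • x := by
    rw [sub_smul, one_smul]; abel
  have habs2 : |‖x-y‖ - (1-r)*‖x‖| ≤ ‖r • x - y‖ := by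
    rw [hsplit]
    have := abs_norm_sub_norm_le (x - y) ((1-r) • x)
    rwa [norm_smul, Real.norm_eq_abs, abs_of_pos ht] at this
  have habs2' := abs_le.mp habs2
  exact real_est d hd ‖x‖ ‖x-y‖ (inner ℝ x y) ‖r • x - y‖ (‖y‖^2) r (1-r^2)
    (r^2*‖x‖^2 - 2*r*(inner ℝ x y : ℝ) + ‖y‖^2)
    ((r^2*‖x‖^2 - 2*r*(inner ℝ x y : ℝ) + ‖y‖^2)/(1-r^2))
    (norm_nonneg x) (norm_nonneg _) (norm_nonneg _) hδx hδ2 hr0 hr1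
    rfl rfl rfl (norm_smul_sub_sq d x y r).symm hCS (by linarith [habs2'.1]) (by linarith [habs2'.2])

set_option maxHeartbeats 1000000 in
theorem stmt7 (d : ℕ) :
    ∃ C : ℝ, 0 < C ∧ ∀ x y : EuclideanSpace ℝ (Fin d), (x, y) ∈ localRegion d 2 → x ≠ y →
      (∫ r in (0:ℝ)..1, |deriv (fun r' => mehler d r' x y) r|) ≤ C * ‖x - y‖ ^ (-(d : ℝ)) := by
  rcases Nat.eq_zero_or_pos d with hd0 | hd
  · refine ⟨1, one_pos, fun x y hmem hxy => absurd ?_ hxy⟩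
    subst hd0; ext i; exact i.elim0
  have hdR : (1:ℝ) ≤ (d:ℝ) := by exact_mod_cast hd
  have hdpos : (0:ℝ) < (d:ℝ) := by linarith
  set K : ℝ := 2*((d:ℝ)+18) with hK
  have hKpos : 0 < K := by rw [hK]; positivity
  refine ⟨(2/(d:ℝ))*K*(1+(d.factorial:ℝ)) * 32^((d:ℝ)/2), by positivity,
    fun x y hmem hxy => ?_⟩
  have hloc : ‖x - y‖ ≤ 2 / (1 + ‖x‖ + ‖y‖) := hmem
  set f : ℝ → ℝ := fun r' => mehler d r' x y with hf
  set δ : ℝ := ‖x - y‖ with hδ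
  have hδpos : 0 < δ := by rw [hδ]; exact norm_pos_iff.mpr (sub_ne_zero.mpr hxy)
  have hδ2 : δ ≤ 2 := by
    have hden : (0:ℝ) < 1 + ‖x‖ + ‖y‖ := by positivity
    have hloc' : δ * (1 + ‖x‖ + ‖y‖) ≤ 2 := by rw [hδ, ← le_div_iff₀ hden]; exact hloc
    nlinarith [norm_nonneg x, norm_nonneg y]
  set a : ℝ := δ^2/32 with ha
  have ha0 : 0 < a := by rw [ha]; positivity
  have ha8 : a ≤ 1/8 := by rw [ha]; nlinarith
  set r₀ : ℝ := 1 - a with hr₀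
  have hr₀0 : (0:ℝ) ≤ r₀ := by rw [hr₀]; linarith
  have hr₀1 : r₀ < 1 := by rw [hr₀]; linarith
  -- pointwise bound from key_bound
  have hKB : ∀ r : ℝ, 0 ≤ r → r < 1 →
      |deriv f r| ≤ K * (1-r)^(-(d:ℝ)/2-1) * Real.exp (-a/(1-r)) := by
    intro r h0 h1
    rw [hf, hK, ha, hδ]
    exact key_bound d hd x y hloc r h0 h1
  -- bound 1 on [0, r₀]
  have hg1 : ∀ r : ℝ, 0 ≤ r → r < 1 → |deriv f r| ≤ K * (1-r)^(-(d:ℝ)/2-1) := by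
    intro r h0 h1
    have h2 := hKB r h0 h1
    have h3 : Real.exp (-a/(1-r)) ≤ 1 := by
      apply Real.exp_le_one_iff.mpr
      apply div_nonpos_of_nonpos_of_nonneg (by linarith) (by linarith)
    have h4 : (0:ℝ) < (1-r)^(-(d:ℝ)/2-1) := Real.rpow_pos_of_pos (by linarith) _
    have h5 := mul_le_mul_of_nonneg_left h3 (mul_pos hKpos h4).le
    rw [mul_one] at h5
    nlinarith [h2, h5]
  -- bound 2 on [r₀, 1)
  have hg2 : ∀ r : ℝ, r₀ ≤ r → r < 1 →
      |deriv f r| ≤ (K * (d.factorial:ℝ) * a^(-(d:ℝ))) * (1-r)^((d:ℝ)/2-1) := by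
    intro r h0 h1
    have hr0' : (0:ℝ) ≤ r := by linarith
    have ht : (0:ℝ) < 1 - r := by linarith
    have h2 := hKB r hr0' h1
    have hz : 0 < a/(1-r) := by positivity
    have h3 : Real.exp (-a/(1-r)) ≤ (d.factorial:ℝ) * (1-r)^(d:ℕ) / a^(d:ℕ) := by
      have h4 := aux_pow_le_exp hz.le d
      have h5 : (0:ℝ) < (a/(1-r))^(d:ℕ) / (d.factorial:ℝ) := by positivity
      have h6 : Real.exp (-(a/(1-r))) ≤ ((a/(1-r))^(d:ℕ) / (d.factorial:ℝ))⁻¹ := by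
        rw [Real.exp_neg]
        exact inv_anti₀ h5 h4
      rw [neg_div]
      calc Real.exp (-(a/(1-r))) ≤ ((a/(1-r))^(d:ℕ) / (d.factorial:ℝ))⁻¹ := h6
        _ = (d.factorial:ℝ) * (1-r)^(d:ℕ) / a^(d:ℕ) := by
            have hane : a ≠ 0 := ha0.ne'
            have htne : (1-r) ≠ 0 := ht.ne'
            have hfne : (d.factorial:ℝ) ≠ 0 := Nat.cast_ne_zero.mpr d.factorial_ne_zero
            rw [div_pow]
            field_simp
    have h7 : K * (1-r)^(-(d:ℝ)/2-1) * ((d.factorial:ℝ) * (1-r)^(d:ℕ) / a^(d:ℕ)) =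
        (K * (d.factorial:ℝ) * a^(-(d:ℝ))) * (1-r)^((d:ℝ)/2-1) := by
      have e1 : (1-r)^(-(d:ℝ)/2-1) * (1-r)^((d:ℝ)) = (1-r)^((d:ℝ)/2-1) := by
        rw [← Real.rpow_add ht]; ring_nf
      have e2 : (a:ℝ)^(d:ℕ) = a^((d:ℝ)) := (Real.rpow_natCast a d).symm
      have e3 : ((1-r):ℝ)^(d:ℕ) = (1-r)^((d:ℝ)) := (Real.rpow_natCast _ d).symm
      have e4 : a^(-(d:ℝ)) * a^((d:ℝ)) = 1 := by
        rw [← Real.rpow_add ha0]; simp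
      have hAd : (0:ℝ) < a^((d:ℝ)) := Real.rpow_pos_of_pos ha0 _
      have e6 : K * (d.factorial:ℝ) / a^((d:ℝ)) = K * (d.factorial:ℝ) * a^(-(d:ℝ)) := by
        rw [Real.rpow_neg ha0.le]; ring
      rw [e2, e3]
      calc K * (1-r)^(-(d:ℝ)/2-1) * ((d.factorial:ℝ) * (1-r)^((d:ℝ)) / a^((d:ℝ)))
          = (K * (d.factorial:ℝ) / a^((d:ℝ))) * ((1-r)^(-(d:ℝ)/2-1) * (1-r)^((d:ℝ))) := by
            ring
        _ = (K * (d.factorial:ℝ) / a^((d:ℝ))) * (1-r)^((d:ℝ)/2-1) := by rw [e1]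
        _ = (K * (d.factorial:ℝ) * a^(-(d:ℝ))) * (1-r)^((d:ℝ)/2-1) := by rw [e6]
    have h8 : (0:ℝ) < (1-r)^(-(d:ℝ)/2-1) := Real.rpow_pos_of_pos ht _
    calc |deriv f r| ≤ K * (1-r)^(-(d:ℝ)/2-1) * Real.exp (-a/(1-r)) := h2
      _ ≤ K * (1-r)^(-(d:ℝ)/2-1) * ((d.factorial:ℝ) * (1-r)^(d:ℕ) / a^(d:ℕ)) := by
          apply mul_le_mul_of_nonneg_left h3 (by positivity)
      _ = _ := h7
  -- measurability
  have hmeas : Measurable (fun r => |deriv f r|) := (measurable_deriv f).abs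
  -- integrability on [0, r₀]
  have I1 : IntervalIntegrable (fun r => |deriv f r|) volume 0 r₀ := by
    rw [intervalIntegrable_iff_integrableOn_Ioc_of_le hr₀0]
    apply Integrable.mono' (g := fun _ => K * a^(-(d:ℝ)/2-1))
      (integrableOn_const measure_Ioc_lt_top.ne)
      hmeas.aestronglyMeasurable.restrict
    apply (ae_restrict_iff' measurableSet_Ioc).mpr
    apply Filter.Eventually.of_forall
    intro r hr
    rw [Real.norm_eq_abs, abs_abs]
    have h1 := hg1 r hr.1.le (lt_of_le_of_lt hr.2 hr₀1)
    have h2 : (1-r)^(-(d:ℝ)/2-1) ≤ a^(-(d:ℝ)/2-1) := by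
      apply Real.rpow_le_rpow_of_nonpos ha0
      · rw [hr₀] at hr; linarith [hr.2]
      · linarith
    calc |deriv f r| ≤ K * (1-r)^(-(d:ℝ)/2-1) := h1
      _ ≤ K * a^(-(d:ℝ)/2-1) := mul_le_mul_of_nonneg_left h2 hKpos.le
  -- integrability of g2 on [r₀, 1]
  have Ig2 : IntervalIntegrable (fun r : ℝ => (1-r)^((d:ℝ)/2-1)) volume r₀ 1 := by
    have hq : (-1:ℝ) < (d:ℝ)/2-1 := by linarith
    have base := intervalIntegral.intervalIntegrable_rpow' (a := 0) (b := a) hq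
    have := base.comp_sub_left 1
    simpa [hr₀] using this.symm
  have Ig2' : IntervalIntegrable
      (fun r : ℝ => (K * (d.factorial:ℝ) * a^(-(d:ℝ))) * (1-r)^((d:ℝ)/2-1)) volume r₀ 1 :=
    Ig2.const_mul _
  -- integrability on [r₀, 1]
  have I2 : IntervalIntegrable (fun r => |deriv f r|) volume r₀ 1 := by
    rw [intervalIntegrable_iff_integrableOn_Ioc_of_le hr₀1.le]
    rw [integrableOn_Ioc_iff_integrableOn_Ioo]
    apply Integrable.mono'
      (((intervalIntegrable_iff_integrableOn_Ioc_of_le hr₀1.le).mp Ig2').mono_set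
        Set.Ioo_subset_Ioc_self)
      hmeas.aestronglyMeasurable.restrict
    apply (ae_restrict_iff' measurableSet_Ioo).mpr
    apply Filter.Eventually.of_forall
    intro r hr
    rw [Real.norm_eq_abs, abs_abs]
    exact hg2 r hr.1.le hr.2
  -- split the integral
  have hsplit : (∫ r in (0:ℝ)..1, |deriv f r|) =
      (∫ r in (0:ℝ)..r₀, |deriv f r|) + (∫ r in r₀..1, |deriv f r|) :=
    (intervalIntegral.integral_add_adjacent_intervals I1 I2).symm
  -- integrable comparison g1
  have Ig1 : IntervalIntegrable (fun r : ℝ => K * (1-r)^(-(d:ℝ)/2-1)) volume 0 r₀ := by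
    apply ContinuousOn.intervalIntegrable
    apply ContinuousOn.mul continuousOn_const
    apply ContinuousOn.rpow_const (continuousOn_const.sub continuousOn_id)
    intro r hr
    rw [Set.uIcc_of_le hr₀0] at hr
    left
    have h1 : r ≤ r₀ := hr.2
    have h2 : (0:ℝ) < 1 - r := by rw [hr₀] at h1; linarith
    exact h2.ne'
  -- piece 1 estimate
  have hP1 : (∫ r in (0:ℝ)..r₀, |deriv f r|) ≤ K * ((2/(d:ℝ)) * a^(-(d:ℝ)/2)) := by
    have step : (∫ r in (0:ℝ)..r₀, |deriv f r|) ≤ ∫ r in (0:ℝ)..r₀, K * (1-r)^(-(d:ℝ)/2-1) := by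
      apply intervalIntegral.integral_mono_on hr₀0 I1 Ig1
      intro r hr
      exact hg1 r hr.1 (lt_of_le_of_lt hr.2 hr₀1)
    have hval : (∫ r in (0:ℝ)..r₀, K * (1-r)^(-(d:ℝ)/2-1)) =
        K * ((1^(-(d:ℝ)/2) - a^(-(d:ℝ)/2)) / (-(d:ℝ)/2)) := by
      rw [intervalIntegral.integral_const_mul]
      congr 1
      have : (∫ r in (0:ℝ)..r₀, (1-r)^(-(d:ℝ)/2-1)) =
          ∫ t in (1-r₀)..(1-0:ℝ), t^(-(d:ℝ)/2-1) :=
        intervalIntegral.integral_comp_sub_left (fun t => t^(-(d:ℝ)/2-1)) 1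
      rw [this]
      have h10 : (1:ℝ) - r₀ = a := by rw [hr₀]; ring
      rw [h10, sub_zero]
      rw [integral_rpow (Or.inr ⟨by intro hcon; nlinarith, by
        intro hcon
        rw [Set.mem_uIcc] at hcon
        rcases hcon with ⟨h1,_⟩|⟨_,h2⟩ <;> linarith⟩)]
      norm_num
    rw [hval] at step
    have hap : (0:ℝ) < a^(-(d:ℝ)/2) := Real.rpow_pos_of_pos ha0 _
    have h1p : (1:ℝ)^(-(d:ℝ)/2) = 1 := Real.one_rpow _
    have hkey : ((1:ℝ)^(-(d:ℝ)/2) - a^(-(d:ℝ)/2)) / (-(d:ℝ)/2) =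
        (a^(-(d:ℝ)/2) - 1) * (2/(d:ℝ)) := by
      rw [h1p, div_eq_iff (show (-(d:ℝ)/2) ≠ 0 by intro h; nlinarith)]
      field_simp
      ring
    calc (∫ r in (0:ℝ)..r₀, |deriv f r|)
        ≤ K * ((1^(-(d:ℝ)/2) - a^(-(d:ℝ)/2)) / (-(d:ℝ)/2)) := step
      _ = K * ((a^(-(d:ℝ)/2) - 1) * (2/(d:ℝ))) := by rw [hkey]
      _ ≤ K * ((2/(d:ℝ)) * a^(-(d:ℝ)/2)) := by
          apply mul_le_mul_of_nonneg_left _ hKpos.le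
          have h2d : (0:ℝ) < 2/(d:ℝ) := by positivity
          nlinarith
  -- piece 2 estimate
  have hP2 : (∫ r in r₀..1, |deriv f r|) ≤ K * (d.factorial:ℝ) * ((2/(d:ℝ)) * a^(-(d:ℝ)/2)) := by
    have step : (∫ r in r₀..1, |deriv f r|) ≤
        ∫ r in r₀..1, (K * (d.factorial:ℝ) * a^(-(d:ℝ))) * (1-r)^((d:ℝ)/2-1) := by
      apply intervalIntegral.integral_mono_ae_restrict hr₀1.le I2 Ig2'
      have hone : ∀ᵐ r ∂(volume.restrict (Set.Icc r₀ 1)), r ≠ 1 := by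
        apply ae_restrict_of_ae
        rw [MeasureTheory.ae_iff]
        have hset : {a : ℝ | ¬ a ≠ 1} = {(1:ℝ)} := by ext r; simp
        rw [hset]
        exact Real.volume_singleton
      filter_upwards [ae_restrict_mem measurableSet_Icc, hone] with r hr hne
      exact hg2 r hr.1 (lt_of_le_of_ne hr.2 hne)
    have hval : (∫ r in r₀..1, (K * (d.factorial:ℝ) * a^(-(d:ℝ))) * (1-r)^((d:ℝ)/2-1)) =
        (K * (d.factorial:ℝ) * a^(-(d:ℝ))) * (a^((d:ℝ)/2) / ((d:ℝ)/2)) := by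
      rw [intervalIntegral.integral_const_mul]
      congr 1
      have : (∫ r in r₀..1, (1-r)^((d:ℝ)/2-1)) =
          ∫ t in (1-1:ℝ)..(1-r₀), t^((d:ℝ)/2-1) :=
        intervalIntegral.integral_comp_sub_left (fun t => t^((d:ℝ)/2-1)) 1
      rw [this]
      have h10 : (1:ℝ) - r₀ = a := by rw [hr₀]; ring
      rw [h10, sub_self]
      rw [integral_rpow (Or.inl (by linarith))]
      rw [Real.zero_rpow (by intro hcon; nlinarith : (d:ℝ)/2-1+1 ≠ 0)]
      norm_num
    rw [hval] at step
    have harpow : a^(-(d:ℝ)) * a^((d:ℝ)/2) = a^(-(d:ℝ)/2) := by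
      rw [← Real.rpow_add ha0]; ring_nf
    calc (∫ r in r₀..1, |deriv f r|)
        ≤ (K * (d.factorial:ℝ) * a^(-(d:ℝ))) * (a^((d:ℝ)/2) / ((d:ℝ)/2)) := step
      _ = K * (d.factorial:ℝ) * ((2/(d:ℝ)) * (a^(-(d:ℝ)) * a^((d:ℝ)/2))) := by
          field_simp
      _ = K * (d.factorial:ℝ) * ((2/(d:ℝ)) * a^(-(d:ℝ)/2)) := by rw [harpow]
  -- identity a^(-d/2) = 32^(d/2) * δ^(-d)
  have haid : a^(-(d:ℝ)/2) = 32^((d:ℝ)/2) * δ^(-(d:ℝ)) := by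
    have hδd : ((δ^2:ℝ))^(-(d:ℝ)/2) = δ^(-(d:ℝ)) := by
      rw [← Real.rpow_natCast δ 2, ← Real.rpow_mul hδpos.le]
      congr 1
      push_cast
      ring
    have h32 : ((32:ℝ)^(-(d:ℝ)/2))⁻¹ = 32^((d:ℝ)/2) := by
      rw [← Real.rpow_neg (by norm_num : (0:ℝ) ≤ 32)]
      congr 1
      ring
    rw [ha, Real.div_rpow (sq_nonneg δ) (by norm_num), hδd, div_eq_mul_inv, h32]
    ring
  -- final
  rw [hsplit]
  calc (∫ r in (0:ℝ)..r₀, |deriv f r|) + (∫ r in r₀..1, |deriv f r|)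
      ≤ K * ((2/(d:ℝ)) * a^(-(d:ℝ)/2)) + K * (d.factorial:ℝ) * ((2/(d:ℝ)) * a^(-(d:ℝ)/2)) := by
        linarith [hP1, hP2]
    _ = (2/(d:ℝ))*K*(1+(d.factorial:ℝ)) * a^(-(d:ℝ)/2) := by ring
    _ = (2/(d:ℝ))*K*(1+(d.factorial:ℝ)) * 32^((d:ℝ)/2) * δ^(-(d:ℝ)) := by
        rw [haid]; ring
end

section
/- There are constants c, C > 0 depending only on d such that for all x, y, y' ∈ ℝ^d with |x−y| ≥ 2|y−y'| and all t > 0, writing D(z,t) := (∂_r W_r(z)) evaluated at r = e^{−t}, one has |D(x−y, t) − D(x−y', t)| ≤ C · (|y−y'|/√t) · t^{−d/2−1} · exp(−|x−y|²/(c t)). -/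
open MeasureTheory

/-- `D(z,t) = (∂_r W_r(z))` evaluated at `r = e^{-t}`. -/
noncomputable def Dker (d : ℕ) (z : EuclideanSpace ℝ (Fin d)) (t : ℝ) : ℝ :=
  deriv (fun r => wkernel d r z) (Real.exp (-t))

lemma hasDerivAt_wkernel (d : ℕ) (z : EuclideanSpace ℝ (Fin d)) {r : ℝ} (hr : -1 < r)
    (hr1 : r < 1) :
    HasDerivAt (fun s => wkernel d s z)
      (Real.pi ^ (-(d : ℝ) / 2) * r * ((d : ℝ) * (1 - r ^ 2) - 2 * ‖z‖ ^ 2) *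
        (1 - r ^ 2) ^ (-(d : ℝ) / 2 - 2) * Real.exp (-‖z‖ ^ 2 / (1 - r ^ 2))) r := by
  have hu : 0 < 1 - r ^ 2 := by nlinarith
  set p : ℝ := -(d : ℝ) / 2 with hp
  have h1 : HasDerivAt (fun s : ℝ => 1 - s ^ 2) (-(2 * r ^ 1)) r := by
    simpa using (hasDerivAt_pow 2 r).const_sub 1
  have h2 : HasDerivAt (fun s : ℝ => (1 - s ^ 2) ^ p)
      ((-(2 * r ^ 1)) * p * (1 - r ^ 2) ^ (p - 1)) r :=
    h1.rpow_const (Or.inl hu.ne')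
  have h3 : HasDerivAt (fun s : ℝ => -‖z‖ ^ 2 / (1 - s ^ 2))
      ((0 * (1 - r ^ 2) - (-‖z‖ ^ 2) * (-(2 * r ^ 1))) / (1 - r ^ 2) ^ 2) r :=
    (hasDerivAt_const r (-‖z‖ ^ 2)).div h1 hu.ne'
  have h4 := h3.exp
  have h5 := (h2.mul h4).const_mul (Real.pi ^ p)
  have h6 : HasDerivAt (fun s => wkernel d s z)
      (Real.pi ^ p *
        ((-(2 * r ^ 1)) * p * (1 - r ^ 2) ^ (p - 1) * Real.exp (-‖z‖ ^ 2 / (1 - r ^ 2)) +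
          (1 - r ^ 2) ^ p *
            (Real.exp (-‖z‖ ^ 2 / (1 - r ^ 2)) *
              ((0 * (1 - r ^ 2) - -‖z‖ ^ 2 * -(2 * r ^ 1)) / (1 - r ^ 2) ^ 2)))) r := by
    simpa only [wkernel, mul_assoc, Pi.mul_apply] using h5
  convert h6 using 1
  have e1 : (1 - r ^ 2) ^ (p - 1) = (1 - r ^ 2) ^ (p - 2) * (1 - r ^ 2) := by
    rw [show p - 1 = (p - 2) + 1 by ring, Real.rpow_add hu, Real.rpow_one]
  have e2 : (1 - r ^ 2) ^ p = (1 - r ^ 2) ^ (p - 2) * (1 - r ^ 2) ^ 2 := by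
    rw [show p = (p - 2) + 2 by ring, Real.rpow_add hu]
    norm_num [Real.rpow_natCast]
  rw [e1, e2]
  field_simp
  ring

noncomputable def phi (d : ℕ) (t a : ℝ) : ℝ :=
  Real.pi ^ (-(d : ℝ) / 2) * Real.exp (-t) *
    ((d : ℝ) * (1 - Real.exp (-t) ^ 2) - 2 * a) *
    (1 - Real.exp (-t) ^ 2) ^ (-(d : ℝ) / 2 - 2) *
    Real.exp (-a / (1 - Real.exp (-t) ^ 2))

lemma exp_neg_lt_one {t : ℝ} (ht : 0 < t) : Real.exp (-t) < 1 :=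
  Real.exp_lt_one_iff.mpr (by linarith)

lemma u_pos {t : ℝ} (ht : 0 < t) : 0 < 1 - Real.exp (-t) ^ 2 := by
  have h1 := exp_neg_lt_one ht
  have h2 := Real.exp_pos (-t)
  nlinarith

lemma Dker_eq (d : ℕ) (z : EuclideanSpace ℝ (Fin d)) {t : ℝ} (ht : 0 < t) :
    Dker d z t = phi d t (‖z‖ ^ 2) := by
  have h := hasDerivAt_wkernel d z (r := Real.exp (-t))
    (by linarith [Real.exp_pos (-t)]) (exp_neg_lt_one ht)
  rw [Dker, h.deriv, phi]

lemma hasDerivAt_phi (d : ℕ) {t : ℝ} (ht : 0 < t) (a : ℝ) :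
    HasDerivAt (fun a => phi d t a)
      (Real.pi ^ (-(d : ℝ) / 2) * Real.exp (-t) *
        (2 * a - ((d : ℝ) + 2) * (1 - Real.exp (-t) ^ 2)) *
        (1 - Real.exp (-t) ^ 2) ^ (-(d : ℝ) / 2 - 3) *
        Real.exp (-a / (1 - Real.exp (-t) ^ 2))) a := by
  set u : ℝ := 1 - Real.exp (-t) ^ 2 with hu'
  have hu : 0 < u := u_pos ht
  set p : ℝ := -(d : ℝ) / 2 with hp
  set K : ℝ := Real.pi ^ p * Real.exp (-t) with hK
  have h1 : HasDerivAt (fun a : ℝ => (d : ℝ) * u - 2 * a) (-2) a := by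
    simpa using ((hasDerivAt_id a).const_mul (2:ℝ)).const_sub ((d : ℝ) * u)
  have h2 : HasDerivAt (fun a : ℝ => -a / u) (-1 / u) a := by
    simpa using ((hasDerivAt_id a).neg.div_const u)
  have h3 := h2.exp
  have h4 := (h1.mul h3).const_mul (K * u ^ (p - 2))
  have h5 : HasDerivAt (fun a => phi d t a)
      (K * u ^ (p - 2) *
        ((-2) * Real.exp (-a / u) + ((d : ℝ) * u - 2 * a) *
          (Real.exp (-a / u) * (-1 / u)))) a := by
    refine HasDerivAt.congr_deriv ?_ rfl
    convert h4 using 2 with b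
    · rfl
    rw [phi, Pi.mul_apply]
    ring
  convert h5 using 1
  have e1 : u ^ (p - 2) = u ^ (p - 3) * u := by
    rw [show p - 2 = (p - 3) + 1 by ring, Real.rpow_add hu, Real.rpow_one]
  rw [e1]
  field_simp
  ring

lemma s_exp_half {s : ℝ} (hs : 0 ≤ s) : s * Real.exp (-(s / 2)) ≤ 1 := by
  have h4 : Real.exp (s / 2) = Real.exp (s / 4) * Real.exp (s / 4) := by
    rw [← Real.exp_add]; ring_nf
  have h : s ≤ Real.exp (s / 2) := by
    nlinarith [Real.add_one_le_exp (s / 4), Real.exp_pos (s / 4), sq_nonneg (s - 4)]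
  calc s * Real.exp (-(s / 2)) ≤ Real.exp (s / 2) * Real.exp (-(s / 2)) :=
        mul_le_mul_of_nonneg_right h (Real.exp_pos _).le
    _ = 1 := by rw [← Real.exp_add]; simp

lemma s_exp_eighth {s : ℝ} (hs : 0 ≤ s) : s * Real.exp (-(s / 8)) ≤ 4 := by
  have h16 : Real.exp (s / 8) = Real.exp (s / 16) * Real.exp (s / 16) := by
    rw [← Real.exp_add]; ring_nf
  have h : s ≤ 4 * Real.exp (s / 8) := by
    nlinarith [Real.add_one_le_exp (s / 16), Real.exp_pos (s / 16), sq_nonneg (s - 16)]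
  calc s * Real.exp (-(s / 8)) ≤ (4 * Real.exp (s / 8)) * Real.exp (-(s / 8)) :=
        mul_le_mul_of_nonneg_right h (Real.exp_pos _).le
    _ = 4 := by rw [mul_assoc, ← Real.exp_add]; simp

lemma deriv_bound_aux (n : ℝ) (hn : 0 ≤ n) {u a A : ℝ} (hu : 0 < u) (hA : 0 ≤ A)
    (ha : A / 4 ≤ a) :
    |2 * a - (n + 2) * u| * Real.exp (-a / u) ≤
      (n + 4) * u * Real.exp (-(A / (8 * u))) := by
  have ha0 : 0 ≤ a := by linarith
  have h1 : |2 * a - (n + 2) * u| ≤ 2 * a + (n + 2) * u :=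
    abs_le.mpr ⟨by nlinarith, by nlinarith⟩
  have hhalf : Real.exp (-a / u) = Real.exp (-(a / (2 * u))) * Real.exp (-(a / (2 * u))) := by
    rw [← Real.exp_add]; congr 1; field_simp; ring
  have h2a : 2 * a * Real.exp (-(a / (2 * u))) ≤ 2 * u := by
    have hs := s_exp_half (div_nonneg ha0 hu.le)
    have he : -(a / (2 * u)) = -(a / u / 2) := by rw [div_div, mul_comm]
    rw [he]
    calc 2 * a * Real.exp (-(a / u / 2))
        = 2 * u * (a / u * Real.exp (-(a / u / 2))) := by field_simp
      _ ≤ 2 * u * 1 := mul_le_mul_of_nonneg_left hs (by linarith)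
      _ = 2 * u := mul_one _
  have hle1 : Real.exp (-(a / (2 * u))) ≤ 1 :=
    Real.exp_le_one_iff.mpr (neg_nonpos.mpr (by positivity))
  have hmono : Real.exp (-(a / (2 * u))) ≤ Real.exp (-(A / (8 * u))) := by
    apply Real.exp_le_exp.mpr
    rw [neg_le_neg_iff, div_le_div_iff₀ (by positivity) (by positivity)]
    nlinarith
  have hE2 := (Real.exp_pos (-(a / (2 * u)))).le
  calc |2 * a - (n + 2) * u| * Real.exp (-a / u)
      ≤ (2 * a + (n + 2) * u) * Real.exp (-a / u) :=
        mul_le_mul_of_nonneg_right h1 (Real.exp_pos _).le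
    _ ≤ (n + 4) * u * Real.exp (-(a / (2 * u))) := by
        rw [hhalf]
        nlinarith [mul_le_mul_of_nonneg_right h2a hE2,
          mul_le_mul_of_nonneg_left hle1 (mul_nonneg (by linarith : (0:ℝ) ≤ n + 2) hu.le),
          mul_nonneg (mul_nonneg (by linarith : (0:ℝ) ≤ n + 2) hu.le) hE2]
    _ ≤ (n + 4) * u * Real.exp (-(A / (8 * u))) :=
        mul_le_mul_of_nonneg_left hmono (by positivity)

lemma b_exp {b u : ℝ} (hb : 0 ≤ b) (hu : 0 < u) :
    b * Real.exp (-(b ^ 2 / (16 * u))) ≤ 2 * Real.sqrt u := by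
  set E := Real.exp (-(b ^ 2 / (16 * u))) with hE
  have key : (b * E) ^ 2 ≤ 4 * u := by
    have h := s_exp_eighth (s := b ^ 2 / u) (by positivity)
    have hsq : E ^ 2 = Real.exp (-(b ^ 2 / u / 8)) := by
      rw [hE, sq, ← Real.exp_add]; congr 1; field_simp; ring
    calc (b * E) ^ 2 = u * (b ^ 2 / u * Real.exp (-(b ^ 2 / u / 8))) := by
          rw [mul_pow, hsq]; field_simp
      _ ≤ u * 4 := mul_le_mul_of_nonneg_left h hu.le
      _ = 4 * u := by ring
  calc b * E = Real.sqrt ((b * E) ^ 2) := (Real.sqrt_sq (by positivity)).symm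
    _ ≤ Real.sqrt (4 * u) := Real.sqrt_le_sqrt key
    _ = 2 * Real.sqrt u := by
        rw [show (4:ℝ) * u = 2 ^ 2 * u by norm_num, Real.sqrt_mul (by positivity),
          Real.sqrt_sq (by norm_num)]

lemma exp_sq {t : ℝ} : Real.exp (-t) ^ 2 = Real.exp (-(2 * t)) := by
  rw [sq, ← Real.exp_add]; ring_nf

lemma u_le_2t (t : ℝ) : 1 - Real.exp (-t) ^ 2 ≤ 2 * t := by
  rw [exp_sq]
  have := Real.add_one_le_exp (-(2 * t))
  linarith

lemma exp_u_bound (d : ℕ) {t : ℝ} (ht : 0 < t) :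
    Real.exp (-t) * (1 - Real.exp (-t) ^ 2) ^ (-(d : ℝ) / 2 - 3 / 2) ≤
      (4 * ((d : ℝ) + 2)) ^ (d + 2) * t ^ (-(d : ℝ) / 2 - 3 / 2) := by
  set q : ℝ := (d : ℝ) / 2 + 3 / 2 with hq
  have hqn : -(d : ℝ) / 2 - 3 / 2 = -q := by rw [hq]; ring
  set u : ℝ := 1 - Real.exp (-t) ^ 2 with hu'
  have hexp1 : Real.exp (-t) < 1 := Real.exp_lt_one_iff.mpr (by linarith)
  have hu : 0 < u := by
    have := Real.exp_pos (-t); nlinarith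
  set m : ℝ := (d : ℝ) + 2 with hm
  have hm2 : (2:ℝ) ≤ m := by
    have : (0:ℝ) ≤ (d : ℝ) := Nat.cast_nonneg d
    linarith
  have hm0 : (0:ℝ) < m := by linarith
  have hq0 : 0 ≤ q := by positivity
  have hlow : 2 * t / (1 + 2 * t) ≤ u := by
    rw [hu', exp_sq, Real.exp_neg]
    have h2 : (Real.exp (2 * t))⁻¹ ≤ (1 + 2 * t)⁻¹ := by
      apply inv_anti₀ (by positivity)
      linarith [Real.add_one_le_exp (2 * t)]
    have h3 : 1 - (1 + 2 * t)⁻¹ = 2 * t / (1 + 2 * t) := by field_simp; ring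
    linarith
  have h1 : u ^ (-q) ≤ (2 * t / (1 + 2 * t)) ^ (-q) :=
    Real.rpow_le_rpow_of_nonpos (by positivity) hlow (by linarith)
  have h2 : (2 * t / (1 + 2 * t)) ^ (-q) = (2 * t) ^ (-q) * (1 + 2 * t) ^ q := by
    rw [Real.div_rpow (by positivity) (by positivity),
      Real.rpow_neg (by positivity : (0:ℝ) ≤ 1 + 2 * t)]
    rw [div_eq_mul_inv, inv_inv]
  have h3 : (1 + 2 * t) ^ q ≤ (1 + 2 * t) ^ (m : ℝ) :=
    Real.rpow_le_rpow_of_exponent_le (by linarith)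
      (by rw [hq, hm]; linarith [Nat.cast_nonneg (α := ℝ) d])
  have h4 : (1 + 2 * t) ^ (m : ℝ) = (1 + 2 * t) ^ (d + 2 : ℕ) := by
    rw [show (m : ℝ) = ((d + 2 : ℕ) : ℝ) by rw [hm]; push_cast; ring, Real.rpow_natCast]
  have hb : 1 + 2 * t ≤ 4 * m * Real.exp (t / (2 * m)) := by
    have he := Real.add_one_le_exp (t / (2 * m))
    have h5 : 4 * m * (t / (2 * m) + 1) = 2 * t + 4 * m := by field_simp; ring
    nlinarith [mul_le_mul_of_nonneg_left he (by linarith : (0:ℝ) ≤ 4 * m)]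
  have h6 : (1 + 2 * t) ^ (d + 2 : ℕ) ≤ (4 * m) ^ (d + 2 : ℕ) * Real.exp (t / 2) := by
    calc (1 + 2 * t) ^ (d + 2 : ℕ) ≤ (4 * m * Real.exp (t / (2 * m))) ^ (d + 2 : ℕ) :=
          pow_le_pow_left₀ (by linarith) hb _
      _ = (4 * m) ^ (d + 2 : ℕ) * Real.exp (t / (2 * m)) ^ (d + 2 : ℕ) := mul_pow _ _ _
      _ = (4 * m) ^ (d + 2 : ℕ) * Real.exp (((d + 2 : ℕ) : ℝ) * (t / (2 * m))) := by
          rw [← Real.exp_nat_mul]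
      _ = (4 * m) ^ (d + 2 : ℕ) * Real.exp (t / 2) := by
          congr 1
          rw [show ((d + 2 : ℕ) : ℝ) = m by rw [hm]; push_cast; ring]
          field_simp
  have h7 : (2 * t) ^ (-q) ≤ t ^ (-q) :=
    Real.rpow_le_rpow_of_nonpos ht (by linarith) (by linarith)
  have hE : Real.exp (t / 2) * Real.exp (-t) ≤ 1 := by
    rw [← Real.exp_add]
    exact Real.exp_le_one_iff.mpr (by linarith)
  have hcm : (0:ℝ) ≤ (4 * m) ^ (d + 2 : ℕ) := by positivity
  have h2t : (0:ℝ) ≤ (2 * t) ^ (-q) := by positivity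
  rw [hqn]
  calc Real.exp (-t) * u ^ (-q)
      ≤ Real.exp (-t) * ((2 * t) ^ (-q) * (1 + 2 * t) ^ q) := by
        rw [← h2]
        exact mul_le_mul_of_nonneg_left h1 (Real.exp_pos _).le
    _ ≤ Real.exp (-t) * ((2 * t) ^ (-q) * ((4 * m) ^ (d + 2 : ℕ) * Real.exp (t / 2))) := by
        apply mul_le_mul_of_nonneg_left _ (Real.exp_pos _).le
        apply mul_le_mul_of_nonneg_left _ h2t
        rw [h4] at h3
        exact le_trans h3 h6
    _ = (4 * m) ^ (d + 2 : ℕ) * (2 * t) ^ (-q) * (Real.exp (t / 2) * Real.exp (-t)) := by ring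
    _ ≤ (4 * m) ^ (d + 2 : ℕ) * (2 * t) ^ (-q) * 1 :=
        mul_le_mul_of_nonneg_left hE (by positivity)
    _ = (4 * m) ^ (d + 2 : ℕ) * (2 * t) ^ (-q) := mul_one _
    _ ≤ (4 * m) ^ (d + 2 : ℕ) * t ^ (-q) := mul_le_mul_of_nonneg_left h7 hcm

set_option maxHeartbeats 1000000 in
theorem stmt10 (d : ℕ) :
    ∃ c : ℝ, 0 < c ∧ ∃ C : ℝ, 0 < C ∧
      ∀ (x y y' : EuclideanSpace ℝ (Fin d)), 2 * ‖y - y'‖ ≤ ‖x - y‖ →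
        ∀ t : ℝ, 0 < t →
          |Dker d (x - y) t - Dker d (x - y') t|
            ≤ C * (‖y - y'‖ / Real.sqrt t) * t ^ (-(d : ℝ) / 2 - 1) *
              Real.exp (-‖x - y‖ ^ 2 / (c * t)) := by
  refine ⟨32, by norm_num, 5 * ((d : ℝ) + 4) * (4 * ((d : ℝ) + 2)) ^ (d + 2),
    by positivity, ?_⟩
  intro x y y' hxy t ht
  have hb0 : (0:ℝ) ≤ ‖x - y‖ := norm_nonneg _
  have hh0 : (0:ℝ) ≤ ‖y - y'‖ := norm_nonneg _
  set b : ℝ := ‖x - y‖ with hbdef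
  set h : ℝ := ‖y - y'‖ with hhdef
  set u : ℝ := 1 - Real.exp (-t) ^ 2 with hu'
  have hu : 0 < u := u_pos ht
  set p : ℝ := -(d : ℝ) / 2 with hp
  set A : ℝ := b ^ 2 with hAdef
  have hA0 : 0 ≤ A := sq_nonneg b
  have hP : (0:ℝ) < Real.pi ^ p := Real.rpow_pos_of_pos Real.pi_pos _
  have hP1 : Real.pi ^ p ≤ 1 := by
    apply Real.rpow_le_one_of_one_le_of_nonpos (by linarith [Real.pi_gt_three])
    rw [hp]
    have : (0:ℝ) ≤ (d : ℝ) := Nat.cast_nonneg d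
    linarith
  -- membership of both squared norms in [A/4, ∞)
  have hxy' : b / 2 ≤ ‖x - y'‖ := by
    have h1 : b ≤ ‖x - y'‖ + h := by
      calc b = ‖(x - y') + (y' - y)‖ := by rw [hbdef]; congr 1; abel
        _ ≤ ‖x - y'‖ + ‖y' - y‖ := norm_add_le _ _
        _ = ‖x - y'‖ + h := by rw [norm_sub_rev y' y]
    linarith
  have ha2 : A / 4 ≤ ‖x - y'‖ ^ 2 := by
    have h2 : (b / 2) ^ 2 ≤ ‖x - y'‖ ^ 2 := by
      apply pow_le_pow_left₀ (by positivity) hxy'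
    rw [hAdef]; nlinarith
  have ha1 : A / 4 ≤ b ^ 2 := by nlinarith
  -- MVT bound
  set M : ℝ := Real.pi ^ p * Real.exp (-t) * ((d : ℝ) + 4) * u ^ (p - 2) *
    Real.exp (-(A / (8 * u))) with hM
  have hM0 : 0 ≤ M := by positivity
  have hderiv : ∀ a ∈ Set.Ici (A / 4), HasDerivWithinAt (fun a => phi d t a)
      (Real.pi ^ p * Real.exp (-t) * (2 * a - ((d : ℝ) + 2) * u) * u ^ (p - 3) *
        Real.exp (-a / u)) (Set.Ici (A / 4)) a :=
    fun a _ => (hasDerivAt_phi d ht a).hasDerivWithinAt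
  have bound : ∀ a ∈ Set.Ici (A / 4),
      ‖Real.pi ^ p * Real.exp (-t) * (2 * a - ((d : ℝ) + 2) * u) * u ^ (p - 3) *
        Real.exp (-a / u)‖ ≤ M := by
    intro a ha
    rw [Real.norm_eq_abs]
    have key := deriv_bound_aux (d : ℝ) (Nat.cast_nonneg d) hu hA0 (Set.mem_Ici.mp ha)
    have habs : |Real.pi ^ p * Real.exp (-t) * (2 * a - ((d : ℝ) + 2) * u) * u ^ (p - 3) *
        Real.exp (-a / u)|
        = (Real.pi ^ p * Real.exp (-t) * u ^ (p - 3)) *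
          (|2 * a - ((d : ℝ) + 2) * u| * Real.exp (-a / u)) := by
      rw [abs_mul, abs_mul, abs_mul, abs_mul, abs_of_pos hP, abs_of_pos (Real.exp_pos _),
        abs_of_pos (Real.exp_pos _), abs_of_nonneg (Real.rpow_nonneg hu.le _)]
      ring
    have e1 : u ^ (p - 2) = u ^ (p - 3) * u := by
      rw [show p - 2 = (p - 3) + 1 by ring, Real.rpow_add hu, Real.rpow_one]
    rw [habs, hM, e1]
    calc (Real.pi ^ p * Real.exp (-t) * u ^ (p - 3)) *
          (|2 * a - ((d : ℝ) + 2) * u| * Real.exp (-a / u))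
        ≤ (Real.pi ^ p * Real.exp (-t) * u ^ (p - 3)) *
          (((d : ℝ) + 4) * u * Real.exp (-(A / (8 * u)))) :=
          mul_le_mul_of_nonneg_left key (by positivity)
      _ = Real.pi ^ p * Real.exp (-t) * ((d : ℝ) + 4) * (u ^ (p - 3) * u) *
          Real.exp (-(A / (8 * u))) := by ring
  have mvt := Convex.norm_image_sub_le_of_norm_hasDerivWithin_le hderiv bound
    (convex_Ici _) (Set.mem_Ici.mpr ha1) (Set.mem_Ici.mpr ha2)
  -- inner product estimate
  have expand0 : ∀ v w : EuclideanSpace ℝ (Fin d),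
      (inner ℝ (v + w) (v - w) : ℝ) = ‖v‖ ^ 2 - ‖w‖ ^ 2 := by
    intro v w
    simp only [inner_add_left, inner_sub_right, real_inner_self_eq_norm_sq,
      real_inner_comm w v]
    ring
  have expand := expand0 (x - y) (x - y')
  have hnorm1 : ‖(x - y) - (x - y')‖ = h := by
    rw [show (x - y) - (x - y') = y' - y by abel, norm_sub_rev]
  have hxyp : ‖x - y'‖ ≤ b + h := by
    calc ‖x - y'‖ = ‖(x - y) + (y - y')‖ := by congr 1; abel
      _ ≤ b + h := norm_add_le _ _
  have hnorm2 : ‖(x - y) + (x - y')‖ ≤ 5 / 2 * b := by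
    calc ‖(x - y) + (x - y')‖ ≤ ‖x - y‖ + ‖x - y'‖ := norm_add_le _ _
      _ ≤ b + (b + h) := by rw [← hbdef]; linarith
      _ ≤ 5 / 2 * b := by linarith
  have hCS := abs_real_inner_le_norm ((x - y) + (x - y')) ((x - y) - (x - y'))
  rw [expand, hnorm1] at hCS
  have hinner : |b ^ 2 - ‖x - y'‖ ^ 2| ≤ 5 / 2 * b * h := by
    calc |b ^ 2 - ‖x - y'‖ ^ 2| ≤ ‖(x - y) + (x - y')‖ * h := hCS
      _ ≤ 5 / 2 * b * h := mul_le_mul_of_nonneg_right hnorm2 hh0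
  -- main MVT consequence
  have main : |Dker d (x - y) t - Dker d (x - y') t| ≤ M * (5 / 2 * b * h) := by
    rw [Dker_eq d _ ht, Dker_eq d _ ht, abs_sub_comm]
    calc |phi d t (‖x - y'‖ ^ 2) - phi d t (b ^ 2)|
        ≤ M * ‖‖x - y'‖ ^ 2 - b ^ 2‖ := mvt
      _ = M * |b ^ 2 - ‖x - y'‖ ^ 2| := by rw [Real.norm_eq_abs, abs_sub_comm]
      _ ≤ M * (5 / 2 * b * h) := mul_le_mul_of_nonneg_left hinner hM0
  -- analytic chain
  have hsplit : Real.exp (-(A / (8 * u)))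
      = Real.exp (-(A / (16 * u))) * Real.exp (-(A / (16 * u))) := by
    rw [← Real.exp_add]; congr 1; field_simp; ring
  have hbe : b * Real.exp (-(A / (16 * u))) ≤ 2 * Real.sqrt u := by
    have := b_exp hb0 hu
    rwa [← hAdef] at this
  have step1 : b * Real.exp (-(A / (8 * u)))
      ≤ 2 * Real.sqrt u * Real.exp (-(A / (16 * u))) := by
    rw [hsplit, ← mul_assoc]
    exact mul_le_mul_of_nonneg_right hbe (Real.exp_pos _).le
  have hE23 : Real.exp (-(A / (16 * u))) ≤ Real.exp (-(A / (32 * t))) := by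
    apply Real.exp_le_exp.mpr
    apply neg_le_neg
    rw [div_le_div_iff₀ (by positivity) (by positivity)]
    nlinarith [u_le_2t t]
  have hsq : Real.sqrt u * u ^ (p - 2) = u ^ (p - 3 / 2) := by
    rw [Real.sqrt_eq_rpow, ← Real.rpow_add hu]
    congr 1; ring
  have hpq : p - 3 / 2 = -(d : ℝ) / 2 - 3 / 2 := by rw [hp]
  have hexpu : Real.exp (-t) * u ^ (p - 3 / 2)
      ≤ (4 * ((d : ℝ) + 2)) ^ (d + 2) * t ^ (-(d : ℝ) / 2 - 3 / 2) := by
    rw [hpq]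
    exact exp_u_bound d ht
  have hrhs : h / Real.sqrt t * t ^ (-(d : ℝ) / 2 - 1) = h * t ^ (-(d : ℝ) / 2 - 3 / 2) := by
    rw [Real.sqrt_eq_rpow, div_eq_mul_inv, ← Real.rpow_neg ht.le, mul_assoc,
      ← Real.rpow_add ht]
    congr 1
    ring
  have hexp_rhs : Real.exp (-A / (32 * t)) = Real.exp (-(A / (32 * t))) := by
    rw [neg_div]
  have ht32 : (0:ℝ) ≤ t ^ (-(d : ℝ) / 2 - 3 / 2) := Real.rpow_nonneg ht.le _
  calc |Dker d (x - y) t - Dker d (x - y') t|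
      ≤ M * (5 / 2 * b * h) := main
    _ = 5 / 2 * ((d : ℝ) + 4) * Real.pi ^ p * h *
        (u ^ (p - 2) * (b * Real.exp (-(A / (8 * u))))) * Real.exp (-t) := by
        rw [hM]; ring
    _ ≤ 5 / 2 * ((d : ℝ) + 4) * Real.pi ^ p * h *
        (u ^ (p - 2) * (2 * Real.sqrt u * Real.exp (-(A / (16 * u))))) * Real.exp (-t) := by
        gcongr
    _ = 5 * ((d : ℝ) + 4) * Real.pi ^ p * h * Real.exp (-(A / (16 * u))) *
        (Real.exp (-t) * (Real.sqrt u * u ^ (p - 2))) := by ring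
    _ = 5 * ((d : ℝ) + 4) * Real.pi ^ p * h * Real.exp (-(A / (16 * u))) *
        (Real.exp (-t) * u ^ (p - 3 / 2)) := by rw [hsq]
    _ ≤ 5 * ((d : ℝ) + 4) * Real.pi ^ p * h * Real.exp (-(A / (16 * u))) *
        ((4 * ((d : ℝ) + 2)) ^ (d + 2) * t ^ (-(d : ℝ) / 2 - 3 / 2)) := by
        gcongr
    _ ≤ 5 * ((d : ℝ) + 4) * 1 * h * Real.exp (-(A / (32 * t))) *
        ((4 * ((d : ℝ) + 2)) ^ (d + 2) * t ^ (-(d : ℝ) / 2 - 3 / 2)) := by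
        gcongr
    _ = 5 * ((d : ℝ) + 4) * (4 * ((d : ℝ) + 2)) ^ (d + 2) *
        (h * t ^ (-(d : ℝ) / 2 - 3 / 2)) * Real.exp (-(A / (32 * t))) := by ring
    _ = 5 * ((d : ℝ) + 4) * (4 * ((d : ℝ) + 2)) ^ (d + 2) *
        (h / Real.sqrt t * t ^ (-(d : ℝ) / 2 - 1)) * Real.exp (-A / (32 * t)) := by
        rw [hrhs, hexp_rhs]
    _ = 5 * ((d : ℝ) + 4) * (4 * ((d : ℝ) + 2)) ^ (d + 2) *
        (h / Real.sqrt t) * t ^ (-(d : ℝ) / 2 - 1) * Real.exp (-A / (32 * t)) := by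
        ring
end

section
/- For every d ≥ 1 there exists a sequence of points x^j ∈ ℝ^d (j ∈ ℕ) such that, setting B_j = B(x^j, 1/(20(1+|x^j|))) (open Euclidean balls) and writing βB_j for the ball with the same center and radius multiplied by β: (i) the family {B_j} covers ℝ^d; (ii) the balls {(1/4)B_j} are pairwise disjoint; (iii) for every β > 0 there is C_β such that Σ_j χ_{βB_j}(x) ≤ C_β for all x ∈ ℝ^d; (iv) B_j × 4B_j ⊆ N_1 for all j; (v) if x ∈ B_j then B(x, 1/(20(1+|x|))) ⊆ 4B_j; (vi) there is a constant C = C(d) such that for every j and every Lebesgue-measurable set V ⊆ 4B_j one has C^{−1} e^{−|x^j|²} Λ(V) ≤ γ(V) ≤ C e^{−|x^j|²} Λ(V); (vii) N_{1/7} ⊆ ⋃_j B_j × 4B_j ⊆ N_2. -/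
open MeasureTheory Metric Set
open scoped ENNReal NNReal

namespace Stmt13Aux

variable {d : ℕ}

noncomputable def rad (x : EuclideanSpace ℝ (Fin d)) : ℝ := 1 / (20 * (1 + ‖x‖))

lemma one_add_pos (x : EuclideanSpace ℝ (Fin d)) : (0:ℝ) < 1 + ‖x‖ := by positivity

lemma rad_pos (x : EuclideanSpace ℝ (Fin d)) : 0 < rad x := by unfold rad; positivity

lemma rad_le (x : EuclideanSpace ℝ (Fin d)) : rad x ≤ 1/20 := by
  unfold rad
  rw [div_le_div_iff₀ (by positivity) (by norm_num)]
  nlinarith [norm_nonneg x]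

lemma norm_le_add (x z : EuclideanSpace ℝ (Fin d)) : ‖x‖ ≤ ‖z‖ + dist x z := by
  rw [dist_eq_norm]
  linarith [norm_sub_norm_le x z]

-- packing lemma placed here (same as before)
lemma packing (hd : 1 ≤ d) (x : EuclideanSpace ℝ (Fin d)) {R r : ℝ} (hr : 0 < r) (hR0 : 0 ≤ R)
    (F : Finset ℕ) (p : ℕ → EuclideanSpace ℝ (Fin d)) (ρ : ℕ → ℝ)
    (hρ : ∀ j ∈ F, r ≤ ρ j)
    (hsub : ∀ j ∈ F, ball (p j) (ρ j) ⊆ ball x R)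
    (hdisj : (↑F : Set ℕ).PairwiseDisjoint fun j => ball (p j) (ρ j)) :
    (F.card : ℝ) * r ^ d ≤ R ^ d := by
  have : Nonempty (Fin d) := Fin.pos_iff_nonempty.mp hd
  haveI : Nontrivial (EuclideanSpace ℝ (Fin d)) := inferInstance
  rcases F.eq_empty_or_nonempty with rfl | ⟨j0, hj0⟩
  · simp
    positivity
  set V := volume (ball (0 : EuclideanSpace ℝ (Fin d)) 1) with hV
  have hV0 : V ≠ 0 := (measure_ball_pos _ _ one_pos).ne'
  have hVtop : V ≠ ⊤ := measure_ball_lt_top.ne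
  have hfr : Module.finrank ℝ (EuclideanSpace ℝ (Fin d)) = d := finrank_euclideanSpace_fin
  have key : (F.card : ℝ≥0∞) * (ENNReal.ofReal (r ^ d) * V) ≤ ENNReal.ofReal (R ^ d) * V := by
    calc (F.card : ℝ≥0∞) * (ENNReal.ofReal (r ^ d) * V)
        = ∑ _j ∈ F, ENNReal.ofReal (r ^ d) * V := by
          rw [Finset.sum_const, nsmul_eq_mul]
      _ ≤ ∑ j ∈ F, volume (ball (p j) (ρ j)) := by
          apply Finset.sum_le_sum
          intro j hj
          rw [Measure.addHaar_ball _ _ (le_trans hr.le (hρ j hj)), hfr, ← hV]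
          exact mul_le_mul_left (ENNReal.ofReal_le_ofReal
            (pow_le_pow_left₀ hr.le (hρ j hj) d)) V
      _ = volume (⋃ j ∈ F, ball (p j) (ρ j)) :=
          (measure_biUnion_finset hdisj (fun j _ => measurableSet_ball)).symm
      _ ≤ volume (ball x R) := measure_mono (Set.iUnion₂_subset hsub)
      _ = ENNReal.ofReal (R ^ d) * V := by
          rw [Measure.addHaar_ball _ _ hR0, hfr]
  rw [← mul_assoc] at key
  have key2 : (F.card : ℝ≥0∞) * ENNReal.ofReal (r ^ d) ≤ ENNReal.ofReal (R ^ d) :=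
    (ENNReal.mul_le_mul_iff_left hV0 hVtop).mp key
  rw [← ENNReal.ofReal_natCast, ← ENNReal.ofReal_mul (by positivity)] at key2
  exact (ENNReal.ofReal_le_ofReal_iff (by positivity)).mp key2

lemma overlap_card (hd : 1 ≤ d) {β : ℝ} (hβ : 0 < β)
    (c : ℕ → EuclideanSpace ℝ (Fin d))
    (hsep' : ∀ i j : ℕ, i ≠ j → rad (c i) / 4 + rad (c j) / 4 ≤ dist (c i) (c j))
    (x : EuclideanSpace ℝ (Fin d)) (F : Finset ℕ)
    (hF : ∀ j ∈ F, dist x (c j) < β * rad (c j)) :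
    (F.card : ℝ) ≤ (8 * (1 + β) ^ 3) ^ d := by
  have ht1 : (1:ℝ) ≤ 1 + ‖x‖ := by linarith [norm_nonneg x]
  have htpos : (0:ℝ) < 1 + ‖x‖ := by linarith
  have hrpos : (0:ℝ) < 1 / (80 * (1 + β) * (1 + ‖x‖)) := by positivity
  have hRpos : (0:ℝ) < 8 * (1 + β) ^ 3 * (1 / (80 * (1 + β) * (1 + ‖x‖))) := by positivity
  -- basic facts about each j ∈ F
  have hfacts : ∀ j ∈ F, 1 + ‖c j‖ ≤ (1 + β) * (1 + ‖x‖) ∧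
      (1 + ‖x‖) ≤ (1 + β) * (1 + ‖c j‖) := by
    intro j hj
    have hB : (0:ℝ) < 1 + ‖c j‖ := one_add_pos (c j)
    have h1 : β * rad (c j) ≤ β / 20 := by
      have := rad_le (c j); have := rad_pos (c j); nlinarith
    have hdle : dist x (c j) ≤ β / 20 := le_trans (hF j hj).le h1
    have hd0 : 0 ≤ dist x (c j) := dist_nonneg
    have e1 : ‖c j‖ ≤ ‖x‖ + dist x (c j) := by
      have h := norm_le_add (c j) x
      rwa [dist_comm (c j) x] at h
    have e2 : ‖x‖ ≤ ‖c j‖ + dist x (c j) := norm_le_add x (c j)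
    constructor
    · nlinarith [norm_nonneg x]
    · nlinarith [norm_nonneg (c j)]
  have hpack := packing hd x hrpos hRpos.le F c (fun j => rad (c j) / 4) ?_ ?_ ?_
  · rw [mul_pow] at hpack
    exact le_of_mul_le_mul_right hpack (pow_pos hrpos d)
  · intro j hj
    obtain ⟨hup, _⟩ := hfacts j hj
    have hB : (0:ℝ) < 1 + ‖c j‖ := one_add_pos (c j)
    show 1 / (80 * (1 + β) * (1 + ‖x‖)) ≤ rad (c j) / 4
    unfold rad
    rw [div_div, div_le_div_iff₀ (by positivity) (by positivity)]
    nlinarith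
  · intro j hj
    obtain ⟨_, hlow⟩ := hfacts j hj
    have hB : (0:ℝ) < 1 + ‖c j‖ := one_add_pos (c j)
    have hrad := rad_pos (c j)
    show ball (c j) (rad (c j) / 4) ⊆ ball x (8 * (1 + β) ^ 3 * (1 / (80 * (1 + β) * (1 + ‖x‖))))
    apply ball_subset_ball'
    have hdist : dist (c j) x < β * rad (c j) := by
      rw [dist_comm]; exact hF j hj
    have hkey : (1/4 + β) * rad (c j) ≤ 8 * (1 + β) ^ 3 * (1 / (80 * (1 + β) * (1 + ‖x‖))) := by
      have hRval : 8 * (1 + β) ^ 3 * (1 / (80 * (1 + β) * (1 + ‖x‖)))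
          = (1 + β) ^ 2 / (10 * (1 + ‖x‖)) := by
        field_simp
        ring
      rw [hRval]
      unfold rad
      rw [mul_one_div, div_le_div_iff₀ (by positivity) (by positivity)]
      -- (1/4 + β) * (10 * (1+‖x‖)) ≤ (1+β)^2 * (20 * (1+‖c j‖))
      have step : (1/4 + β) * (10 * (1 + ‖x‖)) ≤ (1/4 + β) * (10 * ((1 + β) * (1 + ‖c j‖))) := by
        apply mul_le_mul_of_nonneg_left _ (by linarith)
        nlinarith
      refine le_trans step ?_
      nlinarith [sq_nonneg β, mul_pos hβ hB, mul_pos (mul_pos hβ hβ) hB]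
    nlinarith [hrad]
  · intro i hi j hj hij
    exact ball_disjoint_ball (by linarith [hsep' i j hij])

def Sep (S : Set (EuclideanSpace ℝ (Fin d))) : Prop :=
  S.Pairwise fun a b => rad a / 4 + rad b / 4 ≤ dist a b

lemma exists_maximal_sep : ∃ S : Set (EuclideanSpace ℝ (Fin d)),
    Maximal (· ∈ {T : Set (EuclideanSpace ℝ (Fin d)) | Sep T}) S := by
  apply zorn_subset
  intro C hC hchain
  refine ⟨⋃₀ C, ?_, fun s hs => subset_sUnion_of_mem hs⟩
  intro a ha b hb hab
  obtain ⟨s, hsC, has⟩ := ha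
  obtain ⟨t, htC, hbt⟩ := hb
  rcases hchain.total hsC htC with h | h
  · exact hC htC (h has) hbt hab
  · exact hC hsC has (h hbt) hab

lemma maximal_near {S : Set (EuclideanSpace ℝ (Fin d))}
    (hS : Maximal (· ∈ {T : Set (EuclideanSpace ℝ (Fin d)) | Sep T}) S)
    (x : EuclideanSpace ℝ (Fin d)) :
    ∃ c ∈ S, dist x c < rad x / 4 + rad c / 4 := by
  by_contra h
  push_neg at h
  have hx : x ∉ S := by
    intro hx
    have := h x hx
    simp only [dist_self] at this
    nlinarith [rad_pos x]
  have hins : Sep (insert x S) := by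
    intro a ha b hb hab
    rcases ha with rfl | ha
    · rcases hb with rfl | hb
      · exact absurd rfl hab
      · exact h b hb
    · rcases hb with rfl | hb
      · rw [dist_comm]; linarith [h a ha]
      · exact hS.prop ha hb hab
  have := hS.2 hins (subset_insert x S)
  exact hx (this (mem_insert x S))

lemma near_imp_cover {x c : EuclideanSpace ℝ (Fin d)}
    (h : dist x c < rad x / 4 + rad c / 4) : dist x c < rad c := by
  have hb : ‖c‖ ≤ ‖x‖ + dist x c := by
    have := dist_triangle 0 x c
    simp only [dist_comm, dist_zero_left] at this
    calc ‖c‖ = dist c 0 := by simp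
    _ ≤ dist c x + dist x 0 := dist_triangle _ _ _
    _ = ‖x‖ + dist x c := by rw [dist_comm c x]; simp [add_comm]
  have hD : dist x c < 1/40 := lt_of_lt_of_le h (by linarith [rad_le x, rad_le c, rad_pos x, rad_pos c])
  set A := 1 + ‖x‖ with hAdef
  set B := 1 + ‖c‖ with hBdef
  have hA : 1 ≤ A := by have := norm_nonneg x; simp only [hAdef]; linarith
  have hB : 1 ≤ B := by have := norm_nonneg c; simp only [hBdef]; linarith
  have hBA : B ≤ 2 * A := by
    have : B ≤ A + dist x c := by simp [hAdef, hBdef]; linarith [dist_nonneg (x := x) (y := c)]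
    nlinarith
  have h1 : rad x ≤ 2 * rad c := by
    unfold rad
    rw [← hAdef, ← hBdef, (by ring : 2 * (1 / (20 * B)) = 2 / (20 * B)),
      div_le_div_iff₀ (by positivity) (by positivity)]
    nlinarith
  have : rad x / 4 + rad c / 4 ≤ rad c := by linarith [rad_pos c]
  linarith

lemma sep_countable {S : Set (EuclideanSpace ℝ (Fin d))} (hS : Sep S) : S.Countable := by
  have hdisj : S.PairwiseDisjoint fun c => ball c (rad c / 4) := by
    intro a ha b hb hab
    exact ball_disjoint_ball (hS ha hb hab)
  exact hdisj.countable_of_isOpen (fun c _ => isOpen_ball)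
    (fun c _ => ⟨c, mem_ball_self (by linarith [rad_pos c])⟩)

lemma cover_of_maximal {S : Set (EuclideanSpace ℝ (Fin d))}
    (hS : Maximal (· ∈ {T : Set (EuclideanSpace ℝ (Fin d)) | Sep T}) S)
    (x : EuclideanSpace ℝ (Fin d)) : ∃ c ∈ S, dist x c < rad c := by
  obtain ⟨c, hc, h⟩ := maximal_near hS x
  exact ⟨c, hc, near_imp_cover h⟩

lemma sep_infinite (hd : 1 ≤ d) {S : Set (EuclideanSpace ℝ (Fin d))}
    (hS : Maximal (· ∈ {T : Set (EuclideanSpace ℝ (Fin d)) | Sep T}) S) : S.Infinite := by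
  intro hfin
  have : Nonempty (Fin d) := Fin.pos_iff_nonempty.mp hd
  obtain ⟨R, hR⟩ : ∃ R : ℝ, ∀ c ∈ S, ‖c‖ ≤ R := by
    obtain ⟨R, hR⟩ := (hfin.image (‖·‖)).bddAbove
    exact ⟨R, fun c hc => hR (Set.mem_image_of_mem _ hc)⟩
  set x : EuclideanSpace ℝ (Fin d) := EuclideanSpace.single ⟨0, hd⟩ (R + 1) with hx
  obtain ⟨c, hc, hdist⟩ := cover_of_maximal hS x
  have hxnorm : ‖x‖ = |R + 1| := by simp [hx]
  have h1 : ‖x‖ ≤ ‖c‖ + dist x c := by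
    calc ‖x‖ = dist x 0 := by simp
    _ ≤ dist x c + dist c 0 := dist_triangle _ _ _
    _ = ‖c‖ + dist x c := by simp [dist_comm]; ring
  have h2 : R + 1 ≤ |R + 1| := le_abs_self _
  have h3 : 0 ≤ R := le_trans (norm_nonneg c) (hR c hc)
  have := rad_le c
  have := hR c hc
  linarith

lemma sq_close {y c : EuclideanSpace ℝ (Fin d)}
    (h : dist y c < 4 * (1 / (20 * (1 + ‖c‖)))) : |‖y‖ ^ 2 - ‖c‖ ^ 2| ≤ 2/5 := by
  set a := ‖y‖; set b := ‖c‖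
  have hb : 0 ≤ b := norm_nonneg _
  have ha : 0 ≤ a := norm_nonneg _
  have hD : 0 ≤ dist y c := dist_nonneg
  have h0 : |a - b| ≤ dist y c := by
    rw [dist_eq_norm]; exact abs_norm_sub_norm_le y c
  have hD2 : dist y c * (5 * (1 + b)) < 1 := by
    have := mul_lt_mul_of_pos_right h (by positivity : (0:ℝ) < 5 * (1 + b))
    calc dist y c * (5 * (1 + b)) < 4 * (1 / (20 * (1 + b))) * (5 * (1 + b)) := this
    _ = 1 := by field_simp; ring
  have h2 : |a ^ 2 - b ^ 2| = |a - b| * (a + b) := by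
    rw [← abs_of_nonneg (by linarith : (0:ℝ) ≤ a + b), ← abs_mul]
    ring_nf
  rw [h2]
  have hab : a ≤ b + dist y c := by
    have := abs_le.mp h0; linarith [this.1]
  have hDle : dist y c ≤ 1/5 := by nlinarith
  nlinarith [mul_le_mul_of_nonneg_right h0 (by linarith : (0:ℝ) ≤ a + b)]

end Stmt13Aux

/-- The Gaussian measure `dγ(x) = π^{-d/2} e^{-|x|²} dx` on `ℝ^d`. -/
noncomputable def gaussianM (d : ℕ) : Measure (EuclideanSpace ℝ (Fin d)) :=
  volume.withDensity fun x => ENNReal.ofReal (Real.pi ^ (-(d : ℝ) / 2) * Real.exp (-‖x‖ ^ 2))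

set_option maxHeartbeats 1000000 in
theorem stmt13 (d : ℕ) (hd : 1 ≤ d) :
    ∃ c : ℕ → EuclideanSpace ℝ (Fin d),
      -- (i) the balls B_j cover ℝ^d
      (⋃ j, Metric.ball (c j) (1 / (20 * (1 + ‖c j‖))) = Set.univ) ∧
      -- (ii) the balls (1/4)B_j are pairwise disjoint
      (Pairwise fun i j => Disjoint
        (Metric.ball (c i) ((1 / 4) * (1 / (20 * (1 + ‖c i‖)))))
        (Metric.ball (c j) ((1 / 4) * (1 / (20 * (1 + ‖c j‖)))))) ∧
      -- (iii) bounded overlap of the dilated balls βB_j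
      (∀ β : ℝ, 0 < β → ∃ Cβ : ℕ, ∀ x : EuclideanSpace ℝ (Fin d),
        {j : ℕ | x ∈ Metric.ball (c j) (β * (1 / (20 * (1 + ‖c j‖))))}.Finite ∧
        {j : ℕ | x ∈ Metric.ball (c j) (β * (1 / (20 * (1 + ‖c j‖))))}.ncard ≤ Cβ) ∧
      -- (iv) B_j × 4B_j ⊆ N_1
      (∀ j : ℕ, Metric.ball (c j) (1 / (20 * (1 + ‖c j‖))) ×ˢ
          Metric.ball (c j) (4 * (1 / (20 * (1 + ‖c j‖)))) ⊆ localRegion d 1) ∧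
      -- (v)
      (∀ j : ℕ, ∀ x ∈ Metric.ball (c j) (1 / (20 * (1 + ‖c j‖))),
        Metric.ball x (1 / (20 * (1 + ‖x‖)))
          ⊆ Metric.ball (c j) (4 * (1 / (20 * (1 + ‖c j‖))))) ∧
      -- (vi) comparability of γ and Lebesgue measure on 4B_j
      (∃ C : ℝ, 0 < C ∧ ∀ j : ℕ, ∀ V : Set (EuclideanSpace ℝ (Fin d)),
        MeasurableSet V → V ⊆ Metric.ball (c j) (4 * (1 / (20 * (1 + ‖c j‖)))) →
        ENNReal.ofReal (C⁻¹ * Real.exp (-‖c j‖ ^ 2)) * volume V ≤ gaussianM d V ∧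
        gaussianM d V ≤ ENNReal.ofReal (C * Real.exp (-‖c j‖ ^ 2)) * volume V) ∧
      -- (vii)
      (localRegion d (1 / 7) ⊆ ⋃ j, (Metric.ball (c j) (1 / (20 * (1 + ‖c j‖))) ×ˢ
          Metric.ball (c j) (4 * (1 / (20 * (1 + ‖c j‖)))))) ∧
      ((⋃ j, (Metric.ball (c j) (1 / (20 * (1 + ‖c j‖))) ×ˢ
          Metric.ball (c j) (4 * (1 / (20 * (1 + ‖c j‖)))))) ⊆ localRegion d 2) := by
  classical
  obtain ⟨S, hS⟩ := Stmt13Aux.exists_maximal_sep (d := d)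
  have hsep : Stmt13Aux.Sep S := hS.prop
  have hScount := Stmt13Aux.sep_countable hsep
  have hSinf := Stmt13Aux.sep_infinite hd hS
  haveI := hScount.to_subtype
  haveI := hSinf.to_subtype
  obtain ⟨e⟩ : Nonempty (ℕ ≃ S) := nonempty_equiv_of_countable
  set c : ℕ → EuclideanSpace ℝ (Fin d) := fun j => (e j : EuclideanSpace ℝ (Fin d)) with hcdef
  have hmem : ∀ j, c j ∈ S := fun j => (e j).2
  have hinj : Function.Injective c := fun i j h => e.injective (Subtype.ext h)
  have hsurj : ∀ y ∈ S, ∃ j, c j = y := fun y hy => ⟨e.symm ⟨y, hy⟩, by simp [hcdef]⟩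
  have hsep' : ∀ i j : ℕ, i ≠ j →
      Stmt13Aux.rad (c i) / 4 + Stmt13Aux.rad (c j) / 4 ≤ dist (c i) (c j) :=
    fun i j hij => hsep (hmem i) (hmem j) (fun h => hij (hinj h))
  have hBpos : ∀ j : ℕ, (0:ℝ) < 1 + ‖c j‖ := fun j => Stmt13Aux.one_add_pos (c j)
  -- (iv) as a reusable fact
  have hiv : ∀ j : ℕ, Metric.ball (c j) (1 / (20 * (1 + ‖c j‖))) ×ˢ
      Metric.ball (c j) (4 * (1 / (20 * (1 + ‖c j‖)))) ⊆ localRegion d 1 := by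
    intro j p hp
    obtain ⟨hp1, hp2⟩ := hp
    rw [Metric.mem_ball] at hp1 hp2
    simp only [localRegion, Set.mem_setOf_eq]
    have hB : (0:ℝ) < 1 + ‖c j‖ := hBpos j
    have hxy : ‖p.1 - p.2‖ ≤ dist p.1 (c j) + dist p.2 (c j) := by
      rw [← dist_eq_norm]
      calc dist p.1 p.2 ≤ dist p.1 (c j) + dist (c j) p.2 := dist_triangle _ _ _
      _ = dist p.1 (c j) + dist p.2 (c j) := by rw [dist_comm (c j) p.2]
    have ha1 : ‖p.1‖ ≤ ‖c j‖ + dist p.1 (c j) := Stmt13Aux.norm_le_add p.1 (c j)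
    have ha2 : ‖p.2‖ ≤ ‖c j‖ + dist p.2 (c j) := Stmt13Aux.norm_le_add p.2 (c j)
    have hu : (1 / (20 * (1 + ‖c j‖))) * (20 * (1 + ‖c j‖)) = 1 := by field_simp
    have hupos : (0:ℝ) < 1 / (20 * (1 + ‖c j‖)) := by positivity
    have hule : 1 / (20 * (1 + ‖c j‖)) ≤ 1/20 := by
      rw [div_le_div_iff₀ (by positivity) (by norm_num)]
      nlinarith [norm_nonneg (c j)]
    rw [le_div_iff₀ (by positivity : (0:ℝ) < 1 + ‖p.1‖ + ‖p.2‖)]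
    have h5 : ‖p.1 - p.2‖ < 5 * (1 / (20 * (1 + ‖c j‖))) := by linarith
    have h6 : 1 + ‖p.1‖ + ‖p.2‖ ≤ 2 * (1 + ‖c j‖) - 1 + 5 * (1 / (20 * (1 + ‖c j‖))) := by
      linarith
    nlinarith [mul_nonneg (norm_nonneg (p.1 - p.2)) hupos.le, norm_nonneg (p.1 - p.2),
      sq_nonneg (1 / (20 * (1 + ‖c j‖)))]
  have hcov : ∀ x : EuclideanSpace ℝ (Fin d), ∃ j : ℕ,
      dist x (c j) < 1 / (20 * (1 + ‖c j‖)) := by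
    intro x
    obtain ⟨y, hy, hdy⟩ := Stmt13Aux.cover_of_maximal hS x
    obtain ⟨j, rfl⟩ := hsurj y hy
    exact ⟨j, hdy⟩
  refine ⟨c, ?_, ?_, ?_, hiv, ?_, ?_, ?_, ?_⟩
  · -- (i)
    ext x
    simp only [Set.mem_iUnion, Set.mem_univ, iff_true]
    obtain ⟨j, hj⟩ := hcov x
    exact ⟨j, Metric.mem_ball.mpr hj⟩
  · -- (ii)
    intro i j hij
    apply Metric.ball_disjoint_ball
    have := hsep' i j hij
    unfold Stmt13Aux.rad at this
    linarith
  · -- (iii)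
    intro β hβ
    refine ⟨⌈(8 * (1 + β) ^ 3) ^ d⌉₊, fun x => ?_⟩
    have key : ∀ F : Finset ℕ,
        (↑F : Set ℕ) ⊆ {j : ℕ | x ∈ Metric.ball (c j) (β * (1 / (20 * (1 + ‖c j‖))))} →
        (F.card : ℝ) ≤ (8 * (1 + β) ^ 3) ^ d := by
      intro F hF
      apply Stmt13Aux.overlap_card hd hβ c hsep' x F
      intro j hj
      have := hF hj
      simp only [Set.mem_setOf_eq, Metric.mem_ball] at this
      exact this
    have hfin : {j : ℕ | x ∈ Metric.ball (c j) (β * (1 / (20 * (1 + ‖c j‖))))}.Finite := by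
      by_contra hinf
      obtain ⟨F, hFsub, hFcard⟩ := Set.Infinite.exists_subset_card_eq hinf (⌈(8 * (1 + β) ^ 3) ^ d⌉₊ + 1)
      have h1 := key F hFsub
      rw [hFcard] at h1
      have h2 : (8 * (1 + β) ^ 3) ^ d ≤ (⌈(8 * (1 + β) ^ 3) ^ d⌉₊ : ℝ) := Nat.le_ceil _
      push_cast at h1
      linarith
    refine ⟨hfin, ?_⟩
    have h1 := key hfin.toFinset (by simp)
    rw [← Set.ncard_coe_finset, Set.Finite.coe_toFinset] at h1
    have h2 : (8 * (1 + β) ^ 3) ^ d ≤ (⌈(8 * (1 + β) ^ 3) ^ d⌉₊ : ℝ) := Nat.le_ceil _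
    exact_mod_cast le_trans h1 h2
  · -- (v)
    intro j x hx y hy
    rw [Metric.mem_ball] at hx hy ⊢
    have hA : (0:ℝ) < 1 + ‖x‖ := by positivity
    have hB : (0:ℝ) < 1 + ‖c j‖ := hBpos j
    have hxb : ‖c j‖ ≤ ‖x‖ + dist x (c j) := by
      have h := Stmt13Aux.norm_le_add (c j) x
      rwa [dist_comm (c j) x] at h
    have hule : 1 / (20 * (1 + ‖c j‖)) ≤ 1/20 := by
      rw [div_le_div_iff₀ (by positivity) (by norm_num)]
      nlinarith [norm_nonneg (c j)]
    have hBA : 1 + ‖c j‖ ≤ 3 * (1 + ‖x‖) := by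
      have h1 : 1 + ‖c j‖ ≤ 1 + ‖x‖ + 1/20 := by linarith
      nlinarith [norm_nonneg x]
    have h1 : 1 / (20 * (1 + ‖x‖)) ≤ 3 * (1 / (20 * (1 + ‖c j‖))) := by
      rw [mul_one_div, div_le_div_iff₀ (by positivity) (by positivity)]
      nlinarith
    have htri : dist y (c j) ≤ dist y x + dist x (c j) := dist_triangle _ _ _
    linarith
  · -- (vi)
    refine ⟨Real.pi ^ ((d:ℝ)/2) * Real.exp (2/5), by positivity, fun j V hV hVsub => ?_⟩
    have hπ : (1:ℝ) ≤ Real.pi := by linarith [Real.pi_gt_three]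
    have hCinv : (Real.pi ^ ((d:ℝ)/2) * Real.exp (2/5))⁻¹
        = Real.pi ^ (-(d:ℝ)/2) * Real.exp (-(2/5)) := by
      rw [mul_inv, ← Real.rpow_neg (by linarith), ← Real.exp_neg, neg_div]
    have hγ : gaussianM d V
        = ∫⁻ y in V, ENNReal.ofReal (Real.pi ^ (-(d:ℝ)/2) * Real.exp (-‖y‖^2)) ∂volume :=
      withDensity_apply _ hV
    have hmeas : Measurable fun y : EuclideanSpace ℝ (Fin d) =>
        ENNReal.ofReal (Real.pi ^ (-(d:ℝ)/2) * Real.exp (-‖y‖^2)) := by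
      apply Measurable.ennreal_ofReal
      fun_prop
    constructor
    · rw [hγ, ← setLIntegral_const V]
      apply setLIntegral_mono hmeas
      intro y hy
      apply ENNReal.ofReal_le_ofReal
      rw [hCinv]
      have hclose := Stmt13Aux.sq_close (Metric.mem_ball.mp (hVsub hy))
      have h1 : Real.exp (-(2/5)) * Real.exp (-‖c j‖^2) ≤ Real.exp (-‖y‖^2) := by
        rw [← Real.exp_add]
        apply Real.exp_le_exp.mpr
        have := abs_le.mp hclose
        linarith [this.1, this.2]
      have h2 : (0:ℝ) ≤ Real.pi ^ (-(d:ℝ)/2) := Real.rpow_nonneg (by linarith) _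
      calc Real.pi ^ (-(d:ℝ)/2) * Real.exp (-(2/5)) * Real.exp (-‖c j‖^2)
          = Real.pi ^ (-(d:ℝ)/2) * (Real.exp (-(2/5)) * Real.exp (-‖c j‖^2)) := by ring
        _ ≤ Real.pi ^ (-(d:ℝ)/2) * Real.exp (-‖y‖^2) := mul_le_mul_of_nonneg_left h1 h2
    · rw [hγ, ← setLIntegral_const V]
      apply setLIntegral_mono measurable_const
      intro y hy
      apply ENNReal.ofReal_le_ofReal
      have hclose := Stmt13Aux.sq_close (Metric.mem_ball.mp (hVsub hy))
      have h1 : Real.exp (-‖y‖^2) ≤ Real.exp (2/5) * Real.exp (-‖c j‖^2) := by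
        rw [← Real.exp_add]
        apply Real.exp_le_exp.mpr
        have := abs_le.mp hclose
        linarith [this.1, this.2]
      have h2 : Real.pi ^ (-(d:ℝ)/2) ≤ Real.pi ^ ((d:ℝ)/2) := by
        apply Real.rpow_le_rpow_of_exponent_le hπ
        have : (0:ℝ) ≤ (d:ℝ) := Nat.cast_nonneg d
        linarith
      have h3 : (0:ℝ) ≤ Real.exp (-‖y‖^2) := (Real.exp_pos _).le
      have h4 : (0:ℝ) ≤ Real.pi ^ ((d:ℝ)/2) := Real.rpow_nonneg (by linarith) _
      calc Real.pi ^ (-(d:ℝ)/2) * Real.exp (-‖y‖^2)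
          ≤ Real.pi ^ ((d:ℝ)/2) * (Real.exp (2/5) * Real.exp (-‖c j‖^2)) :=
            mul_le_mul h2 h1 h3 h4
        _ = Real.pi ^ ((d:ℝ)/2) * Real.exp (2/5) * Real.exp (-‖c j‖^2) := by ring
  · -- (vii) first inclusion
    intro p hp
    simp only [localRegion, Set.mem_setOf_eq] at hp
    obtain ⟨j, hj⟩ := hcov p.1
    simp only [Set.mem_iUnion]
    refine ⟨j, Set.mem_prod.mpr ⟨Metric.mem_ball.mpr hj, Metric.mem_ball.mpr ?_⟩⟩
    have hA : (0:ℝ) < 1 + ‖p.1‖ := by positivity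
    have hB : (0:ℝ) < 1 + ‖c j‖ := hBpos j
    have hT : (0:ℝ) < 1 + ‖p.1‖ + ‖p.2‖ := by positivity
    have hule : 1 / (20 * (1 + ‖c j‖)) ≤ 1/20 := by
      rw [div_le_div_iff₀ (by positivity) (by norm_num)]
      nlinarith [norm_nonneg (c j)]
    have hxb : ‖c j‖ ≤ ‖p.1‖ + dist p.1 (c j) := by
      have h := Stmt13Aux.norm_le_add (c j) p.1
      rwa [dist_comm (c j) p.1] at h
    have hBA : 20 * (1 + ‖c j‖) ≤ 21 * (1 + ‖p.1‖ + ‖p.2‖) := by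
      have h1 : 1 + ‖c j‖ ≤ 1 + ‖p.1‖ + 1/20 := by linarith
      nlinarith [norm_nonneg p.1, norm_nonneg p.2]
    have h1 : (1/7) / (1 + ‖p.1‖ + ‖p.2‖) ≤ 3 * (1 / (20 * (1 + ‖c j‖))) := by
      rw [mul_one_div, div_le_div_iff₀ (by positivity) (by positivity)]
      linarith
    have htri : dist p.2 (c j) ≤ ‖p.1 - p.2‖ + dist p.1 (c j) := by
      calc dist p.2 (c j) ≤ dist p.2 p.1 + dist p.1 (c j) := dist_triangle _ _ _
      _ = ‖p.1 - p.2‖ + dist p.1 (c j) := by rw [dist_comm p.2 p.1, dist_eq_norm]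
    linarith
  · -- (vii) second inclusion
    intro p hp
    simp only [Set.mem_iUnion] at hp
    obtain ⟨j, hpj⟩ := hp
    have h1 := hiv j hpj
    simp only [localRegion, Set.mem_setOf_eq] at h1 ⊢
    have hT : (0:ℝ) < 1 + ‖p.1‖ + ‖p.2‖ := by positivity
    have h2 : (1:ℝ) / (1 + ‖p.1‖ + ‖p.2‖) ≤ 2 / (1 + ‖p.1‖ + ‖p.2‖) := by
      gcongr
      norm_num
    linarith
end

section
/- Let (Y, ζ) be a metric space and μ a Borel measure on Y which is globally doubling: there is C_D such that 0 < μ(B(x,2r)) ≤ C_D μ(B(x,r)) < ∞ for all x ∈ Y and r > 0, where B(x,r) denotes the open ball. Then for every c > 0 there is a constant C = C(C_D, c) such that for all x ∈ Y, all t > 0 and all η > 0, (1/μ(B(x,√t))) · exp(−η²/(c t)) ≤ C · (1/μ(B(x,η))) · exp(−η²/(2c t)). -/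
open MeasureTheory

theorem stmt14 {Y : Type*} [MetricSpace Y] [MeasurableSpace Y]
    (μ : Measure Y) (C_D : ℝ)
    (hdoub : ∀ (x : Y) (r : ℝ), 0 < r →
      μ (Metric.ball x (2 * r)) ≤ ENNReal.ofReal C_D * μ (Metric.ball x r))
    (hpos : ∀ (x : Y) (r : ℝ), 0 < r → 0 < μ (Metric.ball x r))
    (hfin : ∀ (x : Y) (r : ℝ), 0 < r → μ (Metric.ball x r) < ⊤)
    (c : ℝ) (hc : 0 < c) :
    ∃ C : ℝ, 0 < C ∧ ∀ (x : Y) (t η : ℝ), 0 < t → 0 < η →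
      Real.exp (-η ^ 2 / (c * t)) / (μ (Metric.ball x (Real.sqrt t))).toReal
        ≤ C * (Real.exp (-η ^ 2 / (2 * c * t)) / (μ (Metric.ball x η)).toReal) := by
  -- iterated doubling
  have hiter : ∀ (x : Y) (r : ℝ), 0 < r → ∀ k : ℕ,
      μ (Metric.ball x (2 ^ k * r)) ≤ (ENNReal.ofReal C_D) ^ k * μ (Metric.ball x r) := by
    intro x r hr k
    induction k with
    | zero => simp
    | succ n ih =>
      have h2 : (2:ℝ) ^ (n+1) * r = 2 * (2 ^ n * r) := by ring
      rw [h2]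
      calc μ (Metric.ball x (2 * (2 ^ n * r)))
          ≤ ENNReal.ofReal C_D * μ (Metric.ball x (2 ^ n * r)) :=
            hdoub x _ (by positivity)
        _ ≤ ENNReal.ofReal C_D * ((ENNReal.ofReal C_D) ^ n * μ (Metric.ball x r)) :=
            mul_le_mul_right ih _
        _ = (ENNReal.ofReal C_D) ^ (n+1) * μ (Metric.ball x r) := by ring
  set β : ℝ := Real.logb 2 C_D with hβ
  refine ⟨max 1 (C_D * Real.exp (β ^ 2 * c / 2)),
    lt_of_lt_of_le one_pos (le_max_left _ _), ?_⟩
  intro x t η ht hη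
  set C : ℝ := max 1 (C_D * Real.exp (β ^ 2 * c / 2)) with hCdef
  have hst : 0 < Real.sqrt t := Real.sqrt_pos.mpr ht
  have hApos : 0 < (μ (Metric.ball x (Real.sqrt t))).toReal :=
    ENNReal.toReal_pos (hpos x _ hst).ne' (hfin x _ hst).ne
  have hBpos : 0 < (μ (Metric.ball x η)).toReal :=
    ENNReal.toReal_pos (hpos x _ hη).ne' (hfin x _ hη).ne
  set A : ℝ := (μ (Metric.ball x (Real.sqrt t))).toReal
  set B : ℝ := (μ (Metric.ball x η)).toReal
  -- C_D ≥ 1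
  have hC1 : 1 ≤ C_D := by
    have hm : μ (Metric.ball x 1) ≤ μ (Metric.ball x 2) :=
      measure_mono (Metric.ball_subset_ball one_le_two)
    have h2 : μ (Metric.ball x 1) ≤ ENNReal.ofReal C_D * μ (Metric.ball x 1) := by
      have h := hdoub x 1 one_pos
      rw [mul_one] at h
      exact hm.trans h
    have h3 : (1 : ENNReal) * μ (Metric.ball x 1) ≤ ENNReal.ofReal C_D * μ (Metric.ball x 1) := by
      rwa [one_mul]
    have h4 : (1 : ENNReal) ≤ ENNReal.ofReal C_D :=
      (ENNReal.mul_le_mul_iff_left (hpos x 1 one_pos).ne' (hfin x 1 one_pos).ne).mp h3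
    by_contra h
    push_neg at h
    exact absurd h4 (by simpa using ENNReal.ofReal_lt_one.mpr h)
  have hCD0 : 0 < C_D := lt_of_lt_of_le one_pos hC1
  by_cases hcase : η ≤ Real.sqrt t
  · -- easy case
    have hBA : B ≤ A :=
      ENNReal.toReal_mono (hfin x _ hst).ne (measure_mono (Metric.ball_subset_ball hcase))
    have hexp : Real.exp (-η ^ 2 / (c * t)) ≤ Real.exp (-η ^ 2 / (2 * c * t)) := by
      apply Real.exp_le_exp.mpr
      rw [div_le_div_iff₀ (by positivity) (by positivity)]
      nlinarith [sq_nonneg η, mul_pos hc ht]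
    calc Real.exp (-η ^ 2 / (c * t)) / A
        ≤ Real.exp (-η ^ 2 / (2 * c * t)) / B :=
          div_le_div₀ (Real.exp_nonneg _) hexp hBpos hBA
      _ ≤ C * (Real.exp (-η ^ 2 / (2 * c * t)) / B) :=
          le_mul_of_one_le_left (by positivity) (le_max_left _ _)
  · push_neg at hcase
    set s : ℝ := η / Real.sqrt t with hs
    have hs1 : 1 < s := (one_lt_div hst).mpr hcase
    have hs0 : 0 < s := lt_trans one_pos hs1
    set k : ℕ := ⌈Real.logb 2 s⌉₊ with hk
    have hlogs : 0 < Real.logb 2 s := Real.logb_pos one_lt_two hs1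
    have hkle : (k : ℝ) < Real.logb 2 s + 1 := Nat.ceil_lt_add_one hlogs.le
    have hsle : s ≤ 2 ^ (k : ℕ) := by
      have h1 : Real.logb 2 s ≤ (k : ℝ) := Nat.le_ceil _
      have := (Real.logb_le_iff_le_rpow one_lt_two hs0).mp h1
      rwa [Real.rpow_natCast] at this
    have hηle : η ≤ 2 ^ k * Real.sqrt t := by
      have := (div_le_iff₀ hst).mp hsle
      linarith
    have hμ : μ (Metric.ball x η) ≤ (ENNReal.ofReal C_D) ^ k * μ (Metric.ball x (Real.sqrt t)) :=
      (measure_mono (Metric.ball_subset_ball hηle)).trans (hiter x _ hst k)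
    have hμ' : μ (Metric.ball x η) ≤ ENNReal.ofReal (C_D ^ k) * μ (Metric.ball x (Real.sqrt t)) := by
      rwa [ENNReal.ofReal_pow hCD0.le]
    have hBle : B ≤ C_D ^ k * A := by
      have hfinR : ENNReal.ofReal (C_D ^ k) * μ (Metric.ball x (Real.sqrt t)) ≠ ⊤ :=
        ENNReal.mul_ne_top ENNReal.ofReal_ne_top (hfin x _ hst).ne
      have := ENNReal.toReal_mono hfinR hμ'
      rwa [ENNReal.toReal_mul, ENNReal.toReal_ofReal (by positivity)] at this
    have hβ0 : 0 ≤ β := Real.logb_nonneg one_lt_two hC1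
    -- key bound on C_D^k * exp(-η²/(2ct))
    have hs2 : s ^ 2 = η ^ 2 / t := by
      rw [hs, div_pow, Real.sq_sqrt ht.le]
    have hexpeq : -η ^ 2 / (2 * c * t) = -(s ^ 2) / (2 * c) := by
      rw [hs2]; field_simp
    have hkey : (C_D : ℝ) ^ k * Real.exp (-η ^ 2 / (2 * c * t)) ≤ C := by
      have h1 : (C_D : ℝ) ^ k ≤ C_D ^ ((Real.logb 2 s + 1 : ℝ)) := by
        rw [← Real.rpow_natCast C_D k]
        exact Real.rpow_le_rpow_of_exponent_le hC1 hkle.le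
      have h2 : C_D ^ ((Real.logb 2 s + 1 : ℝ)) = C_D * Real.exp (Real.log s * β) := by
        have harg : Real.log C_D * Real.logb 2 s = Real.log s * β := by
          rw [hβ, Real.logb, Real.logb]; ring
        rw [Real.rpow_add hCD0, Real.rpow_one, Real.rpow_def_of_pos hCD0, harg, mul_comm]
      have h3 : Real.exp (Real.log s * β) ≤ Real.exp (s * β) := by
        apply Real.exp_le_exp.mpr
        have := Real.log_le_sub_one_of_pos hs0
        nlinarith
      have h4 : s * β - s ^ 2 / (2 * c) ≤ β ^ 2 * c / 2 := by
        have heq : β ^ 2 * c / 2 - (s * β - s ^ 2 / (2 * c)) = (s - β * c) ^ 2 / (2 * c) := by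
          field_simp; ring
        have hnn : 0 ≤ (s - β * c) ^ 2 / (2 * c) :=
          div_nonneg (sq_nonneg _) (by positivity)
        linarith
      calc (C_D : ℝ) ^ k * Real.exp (-η ^ 2 / (2 * c * t))
          ≤ C_D * Real.exp (s * β) * Real.exp (-(s ^ 2) / (2 * c)) := by
            rw [hexpeq]
            apply mul_le_mul_of_nonneg_right _ (Real.exp_nonneg _)
            calc (C_D : ℝ) ^ k ≤ C_D ^ ((Real.logb 2 s + 1 : ℝ)) := h1
              _ = C_D * Real.exp (Real.log s * β) := h2
              _ ≤ C_D * Real.exp (s * β) := by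
                  exact mul_le_mul_of_nonneg_left h3 hCD0.le
        _ = C_D * Real.exp (s * β + -(s ^ 2) / (2 * c)) := by
            rw [mul_assoc, ← Real.exp_add]
        _ ≤ C_D * Real.exp (β ^ 2 * c / 2) := by
            apply mul_le_mul_of_nonneg_left _ hCD0.le
            apply Real.exp_le_exp.mpr
            have : s * β + -(s ^ 2) / (2 * c) = s * β - s ^ 2 / (2 * c) := by ring
            rw [this]
            exact h4
        _ ≤ C := le_max_right _ _
    -- assemble
    have he12 : Real.exp (-η ^ 2 / (c * t)) =
        Real.exp (-η ^ 2 / (2 * c * t)) * Real.exp (-η ^ 2 / (2 * c * t)) := by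
      rw [← Real.exp_add]
      congr 1
      field_simp
      ring
    rw [mul_div_assoc', div_le_div_iff₀ hApos hBpos]
    set e2 : ℝ := Real.exp (-η ^ 2 / (2 * c * t)) with he2def
    have he2pos : 0 < e2 := Real.exp_pos _
    have hDnn : (0:ℝ) ≤ C_D ^ k := by positivity
    have hh1 := mul_le_mul_of_nonneg_left hBle (by positivity : (0:ℝ) ≤ e2 * e2)
    have hh2 := mul_le_mul_of_nonneg_right hkey (by positivity : (0:ℝ) ≤ e2 * A)
    rw [he12]
    nlinarith [hh1, hh2]
end
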